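/- arXiv:1703.09198 — 5 statements merged into one kernel-verified Lean document; each statement's English description precedes it below -/
import Mathlib

section
/- Let H be a real Hilbert space, let P : H → H be an orthogonal projection, and define B : H → ℝ by B(v) = √(1 + ‖Pv‖²). Then for every n ∈ ℕ and all v₀, v₁, ..., v_n ∈ H the n-th Fréchet derivative satisfies B^{(n)}(v₀)(v₁,...,v_n) = Σ_{ϖ ∈ Π_n} [Π_{i=0}^{#ϖ−1}(1−2i)] · [Π_{I ∈ ϖ} c_I] / (1 + ‖P v₀‖²)^{#ϖ − 1/2}, where for a block I of the partition ϖ one sets c_I = ⟨P v₀, v_{min I}⟩ if #I = 1, c_I = ⟨P v_{max I}, v_{min I}⟩ if #I = 2, and c_I = 0 if #I ≥ 3. -/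
/-- The finite set of all partitions of `{1,...,n}` into nonempty pairwise disjoint blocks. -/
def PartsF (n : ℕ) : Finset (Finset (Finset ℕ)) :=
  ((Finset.Icc 1 n).powerset.powerset).filter fun ϖ =>
    ∅ ∉ ϖ ∧ ϖ.biUnion id = Finset.Icc 1 n ∧
      ∀ I ∈ ϖ, ∀ J ∈ ϖ, I ≠ J → Disjoint I J

namespace Stmt4

open Finset

lemma mem_PartsF {n : ℕ} {ϖ : Finset (Finset ℕ)} :
    ϖ ∈ PartsF n ↔ ∅ ∉ ϖ ∧ ϖ.biUnion id = Finset.Icc 1 n ∧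
      ∀ I ∈ ϖ, ∀ J ∈ ϖ, I ≠ J → Disjoint I J := by
  constructor
  · intro h; exact (Finset.mem_filter.1 h).2
  · intro h
    refine Finset.mem_filter.2 ⟨?_, h⟩
    simp only [Finset.mem_powerset]
    intro I hI
    simp only [Finset.mem_powerset]
    intro a ha
    rw [← h.2.1]
    exact Finset.mem_biUnion.2 ⟨I, hI, ha⟩

lemma subset_Icc_of_mem {n : ℕ} {ϖ : Finset (Finset ℕ)} (hϖ : ϖ ∈ PartsF n)
    {I : Finset ℕ} (hI : I ∈ ϖ) : I ⊆ Finset.Icc 1 n := by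
  intro a ha
  rw [← (mem_PartsF.1 hϖ).2.1]
  exact Finset.mem_biUnion.2 ⟨I, hI, ha⟩

def sh (I : Finset ℕ) : Finset ℕ := I.image (· + 1)
def unsh (I : Finset ℕ) : Finset ℕ := I.image (· - 1)
def shP (ϖ : Finset (Finset ℕ)) : Finset (Finset ℕ) := ϖ.image sh

lemma mem_sh {a : ℕ} {I : Finset ℕ} : a ∈ sh I ↔ ∃ b ∈ I, b + 1 = a := by
  simp [sh]

lemma sh_inj : Function.Injective sh :=
  Finset.image_injective (add_left_injective 1)

lemma unsh_sh (I : Finset ℕ) : unsh (sh I) = I := by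
  simp only [unsh, sh, Finset.image_image]
  have : ((fun x => x - 1) ∘ fun x => x + 1) = id := by funext x; simp
  rw [this, Finset.image_id]

lemma sh_unsh {I : Finset ℕ} (h : ∀ a ∈ I, 1 ≤ a) : sh (unsh I) = I := by
  ext a
  simp only [sh, unsh, Finset.image_image, Finset.mem_image, Function.comp]
  constructor
  · rintro ⟨b, hb, rfl⟩
    have hb1 := h b hb
    have : b - 1 + 1 = b := by omega
    rw [this]; exact hb
  · intro ha
    exact ⟨a, ha, by have := h a ha; omega⟩

lemma one_le_of_mem_sh {a : ℕ} {I : Finset ℕ} (ha : a ∈ sh I) : 1 ≤ a := by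
  rcases mem_sh.1 ha with ⟨b, _, rfl⟩; omega

lemma card_sh (I : Finset ℕ) : (sh I).card = I.card :=
  Finset.card_image_of_injective _ (add_left_injective 1)

lemma sh_empty_iff {I : Finset ℕ} : sh I = ∅ ↔ I = ∅ := by
  simp [sh]

lemma disjoint_sh {I J : Finset ℕ} (h : Disjoint I J) : Disjoint (sh I) (sh J) := by
  rw [Finset.disjoint_left] at h ⊢
  intro a haI haJ
  rcases mem_sh.1 haI with ⟨b, hb, rfl⟩
  rcases mem_sh.1 haJ with ⟨c, hc, hbc⟩
  have : c = b := by omega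
  exact h hb (this ▸ hc)

lemma two_le_of_mem_sh {n a : ℕ} {I : Finset ℕ} (hI : I ⊆ Finset.Icc 1 n)
    (ha : a ∈ sh I) : 2 ≤ a := by
  rcases mem_sh.1 ha with ⟨b, hb, rfl⟩
  have := Finset.mem_Icc.1 (hI hb)
  omega

lemma biUnion_shP (ϖ : Finset (Finset ℕ)) : (shP ϖ).biUnion id = sh (ϖ.biUnion id) := by
  ext a
  simp only [shP, Finset.mem_biUnion, Finset.mem_image, id, mem_sh]
  constructor
  · rintro ⟨J, ⟨I, hI, rfl⟩, ha⟩
    rcases mem_sh.1 ha with ⟨b, hb, rfl⟩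
    exact ⟨b, ⟨I, hI, hb⟩, rfl⟩
  · rintro ⟨b, ⟨I, hI, hb⟩, rfl⟩
    exact ⟨sh I, ⟨I, hI, rfl⟩, mem_sh.2 ⟨b, hb, rfl⟩⟩

lemma sh_Icc (n : ℕ) : sh (Finset.Icc 1 n) = Finset.Icc 2 (n + 1) := by
  ext a
  simp only [mem_sh, Finset.mem_Icc]
  constructor
  · rintro ⟨b, hb, rfl⟩; omega
  · intro h; exact ⟨a - 1, by omega, by omega⟩

/-- Add `{1}` as a new singleton block (after shifting). -/
def addSing (ϖ : Finset (Finset ℕ)) : Finset (Finset ℕ) := insert {1} (shP ϖ)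

/-- Add `1` to the (shifted) block `I`. -/
def addTo (ϖ : Finset (Finset ℕ)) (I : Finset ℕ) : Finset (Finset ℕ) :=
  insert (insert 1 (sh I)) (shP (ϖ.erase I))

lemma one_not_mem_sh {n : ℕ} {I : Finset ℕ} (hI : I ⊆ Finset.Icc 1 n) : 1 ∉ sh I := by
  intro h
  have := two_le_of_mem_sh hI h
  omega

lemma singleton_one_not_mem_shP {n : ℕ} {ϖ : Finset (Finset ℕ)} (hϖ : ϖ ∈ PartsF n) :
    ({1} : Finset ℕ) ∉ shP ϖ := by
  simp only [shP, Finset.mem_image]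
  rintro ⟨I, hI, hEq⟩
  have : (1 : ℕ) ∈ sh I := hEq ▸ Finset.mem_singleton_self 1
  exact one_not_mem_sh (subset_Icc_of_mem hϖ hI) this

lemma mem_shP_iff {ϖ : Finset (Finset ℕ)} {J : Finset ℕ} :
    J ∈ shP ϖ ↔ ∃ I ∈ ϖ, sh I = J := by simp [shP]

lemma addSing_mem {n : ℕ} {ϖ : Finset (Finset ℕ)} (hϖ : ϖ ∈ PartsF n) :
    addSing ϖ ∈ PartsF (n + 1) := by
  obtain ⟨hne, hcov, hdis⟩ := mem_PartsF.1 hϖ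
  refine mem_PartsF.2 ⟨?_, ?_, ?_⟩
  · simp only [addSing, Finset.mem_insert, mem_shP_iff]
    rintro (h | ⟨I, hI, hshI⟩)
    · exact absurd h.symm (Finset.singleton_ne_empty 1)
    · exact hne ((sh_empty_iff.1 hshI) ▸ hI)
  · rw [addSing, Finset.biUnion_insert, biUnion_shP, hcov, sh_Icc]
    ext a
    simp only [Finset.mem_union, Finset.mem_singleton, Finset.mem_Icc, id]
    omega
  · intro I hI J hJ hIJ
    simp only [addSing, Finset.mem_insert, mem_shP_iff] at hI hJ
    rcases hI with rfl | ⟨I₀, hI₀, rfl⟩ <;> rcases hJ with rfl | ⟨J₀, hJ₀, rfl⟩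
    · exact absurd rfl hIJ
    · simp only [Finset.disjoint_singleton_left]
      exact one_not_mem_sh (subset_Icc_of_mem hϖ hJ₀)
    · simp only [Finset.disjoint_singleton_right]
      exact one_not_mem_sh (subset_Icc_of_mem hϖ hI₀)
    · exact disjoint_sh (hdis _ hI₀ _ hJ₀ (fun h => hIJ (h ▸ rfl)))

lemma addTo_mem {n : ℕ} {ϖ : Finset (Finset ℕ)} (hϖ : ϖ ∈ PartsF n)
    {I : Finset ℕ} (hI : I ∈ ϖ) : addTo ϖ I ∈ PartsF (n + 1) := by
  obtain ⟨hne, hcov, hdis⟩ := mem_PartsF.1 hϖ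
  refine mem_PartsF.2 ⟨?_, ?_, ?_⟩
  · simp only [addTo, Finset.mem_insert, mem_shP_iff]
    rintro (h | ⟨J, hJ, hshJ⟩)
    · exact absurd h.symm (Finset.insert_ne_empty _ _)
    · exact hne ((sh_empty_iff.1 hshJ) ▸ (Finset.mem_erase.1 hJ).2)
  · rw [addTo, Finset.biUnion_insert, biUnion_shP]
    have hsplit : I ∪ (ϖ.erase I).biUnion id = ϖ.biUnion id := by
      ext a
      simp only [Finset.mem_union, Finset.mem_biUnion, id, Finset.mem_erase]
      constructor
      · rintro (ha | ⟨J, ⟨_, hJ⟩, ha⟩)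
        · exact ⟨I, hI, ha⟩
        · exact ⟨J, hJ, ha⟩
      · rintro ⟨J, hJ, ha⟩
        by_cases hJI : J = I
        · exact Or.inl (hJI ▸ ha)
        · exact Or.inr ⟨J, ⟨hJI, hJ⟩, ha⟩
    have : insert 1 (sh I) ∪ sh ((ϖ.erase I).biUnion id)
        = insert 1 (sh (I ∪ (ϖ.erase I).biUnion id)) := by
      ext a
      simp only [Finset.mem_union, Finset.mem_insert, mem_sh]
      constructor
      · rintro ((rfl | ⟨b, hb, rfl⟩) | ⟨b, hb, rfl⟩)
        · exact Or.inl rfl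
        · exact Or.inr ⟨b, Or.inl hb, rfl⟩
        · exact Or.inr ⟨b, Or.inr hb, rfl⟩
      · rintro (rfl | ⟨b, hb | hb, rfl⟩)
        · exact Or.inl (Or.inl rfl)
        · exact Or.inl (Or.inr ⟨b, hb, rfl⟩)
        · exact Or.inr ⟨b, hb, rfl⟩
    simp only [id_eq]
    rw [this, hsplit, hcov, sh_Icc]
    ext a
    simp only [Finset.mem_insert, Finset.mem_Icc]
    omega
  · intro J hJ K hK hJK
    simp only [addTo, Finset.mem_insert, mem_shP_iff] at hJ hK
    have herase : ∀ {L : Finset ℕ}, L ∈ ϖ.erase I → Disjoint (insert 1 (sh I)) (sh L) := by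
      intro L hL
      rcases Finset.mem_erase.1 hL with ⟨hLI, hLϖ⟩
      rw [Finset.disjoint_insert_left]
      exact ⟨one_not_mem_sh (subset_Icc_of_mem hϖ hLϖ),
        disjoint_sh (hdis _ hI _ hLϖ (fun h => hLI (h ▸ rfl)))⟩
    rcases hJ with rfl | ⟨J₀, hJ₀, rfl⟩ <;> rcases hK with rfl | ⟨K₀, hK₀, rfl⟩
    · exact absurd rfl hJK
    · exact herase hK₀
    · exact (herase hJ₀).symm
    · refine disjoint_sh (hdis _ (Finset.mem_of_mem_erase hJ₀) _
        (Finset.mem_of_mem_erase hK₀) (fun h => hJK (h ▸ rfl)))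

/-- Blocks of a partition of `{1,...,n+1}` with `1` removed, empty block dropped. -/
def mid (ϖ' : Finset (Finset ℕ)) : Finset (Finset ℕ) :=
  (ϖ'.image (fun I => I.erase 1)).erase ∅

/-- The partition of `{1,...,n}` obtained by deleting `1` and shifting down. -/
def down (ϖ' : Finset (Finset ℕ)) : Finset (Finset ℕ) := (mid ϖ').image unsh

/-- The block containing `1`. -/
def blk1 (ϖ' : Finset (Finset ℕ)) : Finset ℕ := (ϖ'.filter (fun I => 1 ∈ I)).biUnion id

def opt (ϖ' : Finset (Finset ℕ)) : Option (Finset ℕ) :=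
  if blk1 ϖ' = {1} then none else some (unsh ((blk1 ϖ').erase 1))

def app (ϖ : Finset (Finset ℕ)) : Option (Finset ℕ) → Finset (Finset ℕ)
  | none => addSing ϖ
  | some I => addTo ϖ I

lemma blk_unique {n : ℕ} {ϖ' : Finset (Finset ℕ)} (hϖ' : ϖ' ∈ PartsF n)
    {K K' : Finset ℕ} (hK : K ∈ ϖ') (hK' : K' ∈ ϖ') (h1 : 1 ∈ K) (h1' : 1 ∈ K') :
    K = K' := by
  by_contra hne
  exact Finset.disjoint_left.1 ((mem_PartsF.1 hϖ').2.2 _ hK _ hK' hne) h1 h1'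

lemma blk1_eq {n : ℕ} {ϖ' : Finset (Finset ℕ)} (hϖ' : ϖ' ∈ PartsF n)
    {K : Finset ℕ} (hK : K ∈ ϖ') (h1 : 1 ∈ K) : blk1 ϖ' = K := by
  have hfil : ϖ'.filter (fun I => 1 ∈ I) = {K} := by
    apply Finset.eq_singleton_iff_unique_mem.2
    refine ⟨Finset.mem_filter.2 ⟨hK, h1⟩, ?_⟩
    intro J hJ
    rcases Finset.mem_filter.1 hJ with ⟨hJϖ, hJ1⟩
    exact blk_unique hϖ' hJϖ hK hJ1 h1
  rw [blk1, hfil, Finset.singleton_biUnion, id]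

lemma blk1_mem {n : ℕ} (hn : 1 ≤ n) {ϖ' : Finset (Finset ℕ)} (hϖ' : ϖ' ∈ PartsF n) :
    blk1 ϖ' ∈ ϖ' ∧ 1 ∈ blk1 ϖ' := by
  have h1 : (1 : ℕ) ∈ ϖ'.biUnion id := by
    rw [(mem_PartsF.1 hϖ').2.1]; exact Finset.mem_Icc.2 ⟨le_refl 1, hn⟩
  rcases Finset.mem_biUnion.1 h1 with ⟨K, hK, h1K⟩
  rw [blk1_eq hϖ' hK h1K]
  exact ⟨hK, h1K⟩

lemma mem_mid {n : ℕ} {ϖ' : Finset (Finset ℕ)} (hϖ' : ϖ' ∈ PartsF n)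
    {K : Finset ℕ} (hK : K ∈ ϖ') (h1 : 1 ∈ K) {X : Finset ℕ} :
    X ∈ mid ϖ' ↔ (X ∈ ϖ' ∧ X ≠ K) ∨ (X = K.erase 1 ∧ X ≠ ∅) := by
  obtain ⟨hne, _, hdis⟩ := mem_PartsF.1 hϖ'
  simp only [mid, Finset.mem_erase, Finset.mem_image]
  constructor
  · rintro ⟨hXne, J, hJ, rfl⟩
    by_cases hJK : J = K
    · exact Or.inr ⟨hJK ▸ rfl, hXne⟩
    · have h1J : (1 : ℕ) ∉ J := fun h => hJK (blk_unique hϖ' hJ hK h h1)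
      rw [Finset.erase_eq_of_notMem h1J]
      refine Or.inl ⟨hJ, fun h => hJK ?_⟩
      exact h ▸ rfl
  · rintro (⟨hXϖ, hXK⟩ | ⟨rfl, hXne⟩)
    · have h1X : (1 : ℕ) ∉ X := fun h => hXK (blk_unique hϖ' hXϖ hK h h1)
      exact ⟨fun h => hne (h ▸ hXϖ), X, hXϖ, Finset.erase_eq_of_notMem h1X⟩
    · exact ⟨hXne, K, hK, rfl⟩

lemma mid_subset_Icc {n : ℕ} {ϖ' : Finset (Finset ℕ)} (hϖ' : ϖ' ∈ PartsF (n + 1))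
    {X : Finset ℕ} (hX : X ∈ mid ϖ') : ∀ a ∈ X, 2 ≤ a ∧ a ≤ n + 1 := by
  rcases Finset.mem_erase.1 hX with ⟨_, hX'⟩
  rcases Finset.mem_image.1 hX' with ⟨J, hJ, rfl⟩
  intro a ha
  rcases Finset.mem_erase.1 ha with ⟨ha1, haJ⟩
  have := Finset.mem_Icc.1 (subset_Icc_of_mem hϖ' hJ haJ)
  omega

lemma sh_unsh_mid {n : ℕ} {ϖ' : Finset (Finset ℕ)} (hϖ' : ϖ' ∈ PartsF (n + 1))
    {X : Finset ℕ} (hX : X ∈ mid ϖ') : sh (unsh X) = X :=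
  sh_unsh (fun a ha => by have := (mid_subset_Icc hϖ' hX a ha).1; omega)

lemma shP_down {n : ℕ} {ϖ' : Finset (Finset ℕ)} (hϖ' : ϖ' ∈ PartsF (n + 1)) :
    shP (down ϖ') = mid ϖ' := by
  rw [down, shP, Finset.image_image]
  have : ∀ X ∈ mid ϖ', (sh ∘ unsh) X = id X := fun X hX => sh_unsh_mid hϖ' hX
  rw [Finset.image_congr this, Finset.image_id]

lemma disjoint_unsh {Y₁ Y₂ : Finset ℕ} (h1 : ∀ a ∈ Y₁, 1 ≤ a) (h2 : ∀ a ∈ Y₂, 1 ≤ a)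
    (h : Disjoint Y₁ Y₂) : Disjoint (unsh Y₁) (unsh Y₂) := by
  rw [Finset.disjoint_left] at h ⊢
  intro a ha₁ ha₂
  rcases Finset.mem_image.1 ha₁ with ⟨b₁, hb₁, rfl⟩
  rcases Finset.mem_image.1 ha₂ with ⟨b₂, hb₂, hb⟩
  have e1 := h1 b₁ hb₁
  have e2 := h2 b₂ hb₂
  have : b₂ = b₁ := by omega
  exact h hb₁ (this ▸ hb₂)

lemma unsh_empty_iff {I : Finset ℕ} : unsh I = ∅ ↔ I = ∅ := by simp [unsh]

lemma biUnion_unshP (s : Finset (Finset ℕ)) :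
    (s.image unsh).biUnion id = unsh (s.biUnion id) := by
  ext a
  simp only [Finset.mem_biUnion, Finset.mem_image, id, unsh]
  constructor
  · rintro ⟨J, ⟨X, hX, rfl⟩, ha⟩
    rcases Finset.mem_image.1 ha with ⟨b, hb, rfl⟩
    exact ⟨b, ⟨X, hX, hb⟩, rfl⟩
  · rintro ⟨b, hb, rfl⟩
    rcases hb with ⟨X, hX, hbX⟩
    exact ⟨X.image (· - 1), ⟨X, hX, rfl⟩, Finset.mem_image.2 ⟨b, hbX, rfl⟩⟩

lemma biUnion_mid {n : ℕ} {ϖ' : Finset (Finset ℕ)} (hϖ' : ϖ' ∈ PartsF (n + 1)) :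
    (mid ϖ').biUnion id = Finset.Icc 2 (n + 1) := by
  obtain ⟨hne, hcov, _⟩ := mem_PartsF.1 hϖ'
  ext a
  simp only [Finset.mem_biUnion, id, Finset.mem_Icc]
  constructor
  · rintro ⟨X, hX, haX⟩
    exact ⟨(mid_subset_Icc hϖ' hX a haX).1, (mid_subset_Icc hϖ' hX a haX).2⟩
  · intro ha
    have : a ∈ ϖ'.biUnion id := by rw [hcov]; exact Finset.mem_Icc.2 ⟨by omega, ha.2⟩
    rcases Finset.mem_biUnion.1 this with ⟨J, hJ, haJ⟩
    refine ⟨J.erase 1, ?_, Finset.mem_erase.2 ⟨by omega, haJ⟩⟩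
    refine Finset.mem_erase.2 ⟨?_, Finset.mem_image.2 ⟨J, hJ, rfl⟩⟩
    intro h
    have : a ∈ J.erase 1 := Finset.mem_erase.2 ⟨by omega, haJ⟩
    rw [h] at this
    exact absurd this (Finset.notMem_empty a)

lemma unsh_Icc (n : ℕ) : unsh (Finset.Icc 2 (n + 1)) = Finset.Icc 1 n := by
  ext a
  simp only [unsh, Finset.mem_image, Finset.mem_Icc]
  constructor
  · rintro ⟨b, hb, rfl⟩; omega
  · intro h; exact ⟨a + 1, by omega, by omega⟩

lemma down_mem {n : ℕ} {ϖ' : Finset (Finset ℕ)} (hϖ' : ϖ' ∈ PartsF (n + 1)) :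
    down ϖ' ∈ PartsF n := by
  obtain ⟨hne, hcov, hdis⟩ := mem_PartsF.1 hϖ'
  refine mem_PartsF.2 ⟨?_, ?_, ?_⟩
  · simp only [down, Finset.mem_image]
    rintro ⟨X, hX, hX0⟩
    exact (Finset.mem_erase.1 hX).1 (unsh_empty_iff.1 hX0)
  · rw [down, biUnion_unshP, biUnion_mid hϖ', unsh_Icc]
  · intro Y₁ hY₁ Y₂ hY₂ hY
    rcases Finset.mem_image.1 hY₁ with ⟨X₁, hX₁, rfl⟩
    rcases Finset.mem_image.1 hY₂ with ⟨X₂, hX₂, rfl⟩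
    have hX : X₁ ≠ X₂ := fun h => hY (h ▸ rfl)
    have hdisX : Disjoint X₁ X₂ := by
      obtain ⟨hK, h1⟩ := blk1_mem (by omega) hϖ'
      rcases (mem_mid hϖ' hK h1).1 hX₁ with ⟨hX₁ϖ, hX₁K⟩ | ⟨rfl, hX₁ne⟩ <;>
        rcases (mem_mid hϖ' hK h1).1 hX₂ with ⟨hX₂ϖ, hX₂K⟩ | ⟨rfl, hX₂ne⟩
      · exact hdis _ hX₁ϖ _ hX₂ϖ hX
      · exact Finset.disjoint_of_subset_right (Finset.erase_subset 1 (blk1 ϖ'))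
          (hdis _ hX₁ϖ _ hK hX₁K)
      · exact Finset.disjoint_of_subset_left (Finset.erase_subset 1 (blk1 ϖ'))
          (hdis _ hK _ hX₂ϖ (fun h => hX₂K h.symm))
      · exact absurd rfl hX
    exact disjoint_unsh (fun a ha => by have := (mid_subset_Icc hϖ' hX₁ a ha).1; omega)
      (fun a ha => by have := (mid_subset_Icc hϖ' hX₂ a ha).1; omega) hdisX

lemma nonempty_of_mem {n : ℕ} {ϖ : Finset (Finset ℕ)} (hϖ : ϖ ∈ PartsF n)
    {I : Finset ℕ} (hI : I ∈ ϖ) : I ≠ ∅ :=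
  fun h => (mem_PartsF.1 hϖ).1 (h ▸ hI)

lemma blk1_addSing {n : ℕ} {ϖ : Finset (Finset ℕ)} (hϖ : ϖ ∈ PartsF n) :
    blk1 (addSing ϖ) = {1} :=
  blk1_eq (addSing_mem hϖ) (Finset.mem_insert_self _ _) (Finset.mem_singleton_self 1)

lemma blk1_addTo {n : ℕ} {ϖ : Finset (Finset ℕ)} (hϖ : ϖ ∈ PartsF n)
    {I : Finset ℕ} (hI : I ∈ ϖ) : blk1 (addTo ϖ I) = insert 1 (sh I) :=
  blk1_eq (addTo_mem hϖ hI) (Finset.mem_insert_self _ _) (Finset.mem_insert_self 1 _)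

lemma mid_addSing {n : ℕ} {ϖ : Finset (Finset ℕ)} (hϖ : ϖ ∈ PartsF n) :
    mid (addSing ϖ) = shP ϖ := by
  ext X
  rw [mem_mid (addSing_mem hϖ) (Finset.mem_insert_self _ _) (Finset.mem_singleton_self 1)]
  simp only [Finset.erase_singleton]
  constructor
  · rintro (⟨hX, hX1⟩ | ⟨rfl, h⟩)
    · rcases Finset.mem_insert.1 hX with rfl | h
      · exact absurd rfl hX1
      · exact h
    · exact absurd rfl h
  · intro hX
    refine Or.inl ⟨Finset.mem_insert_of_mem hX, ?_⟩
    intro h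
    exact singleton_one_not_mem_shP hϖ (h ▸ hX)

lemma insert_one_ne_singleton {n : ℕ} {ϖ : Finset (Finset ℕ)} (hϖ : ϖ ∈ PartsF n)
    {I : Finset ℕ} (hI : I ∈ ϖ) : insert 1 (sh I) ≠ ({1} : Finset ℕ) := by
  intro h
  have hne : sh I ≠ ∅ := fun he => nonempty_of_mem hϖ hI (sh_empty_iff.1 he)
  rcases Finset.nonempty_iff_ne_empty.2 hne with ⟨a, ha⟩
  have haK : a ∈ insert 1 (sh I) := Finset.mem_insert_of_mem ha
  rw [h, Finset.mem_singleton] at haK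
  exact one_not_mem_sh (subset_Icc_of_mem hϖ hI) (haK ▸ ha)

lemma mid_addTo {n : ℕ} {ϖ : Finset (Finset ℕ)} (hϖ : ϖ ∈ PartsF n)
    {I : Finset ℕ} (hI : I ∈ ϖ) : mid (addTo ϖ I) = shP ϖ := by
  have hK : insert 1 (sh I) ∈ addTo ϖ I := Finset.mem_insert_self _ _
  have h1sh : (1 : ℕ) ∉ sh I := one_not_mem_sh (subset_Icc_of_mem hϖ hI)
  have hKnotin : insert 1 (sh I) ∉ shP (ϖ.erase I) := by
    intro h
    rcases mem_shP_iff.1 h with ⟨J, hJ, hsh⟩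
    have : (1 : ℕ) ∈ sh J := by rw [hsh]; exact Finset.mem_insert_self 1 _
    exact one_not_mem_sh (subset_Icc_of_mem hϖ (Finset.mem_of_mem_erase hJ)) this
  ext X
  rw [mem_mid (addTo_mem hϖ hI) hK (Finset.mem_insert_self 1 _)]
  rw [Finset.erase_insert h1sh]
  constructor
  · rintro (⟨hX, hXK⟩ | ⟨rfl, h⟩)
    · rcases Finset.mem_insert.1 hX with rfl | h
      · exact absurd rfl hXK
      · rcases mem_shP_iff.1 h with ⟨J, hJ, rfl⟩
        exact mem_shP_iff.2 ⟨J, Finset.mem_of_mem_erase hJ, rfl⟩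
    · exact mem_shP_iff.2 ⟨I, hI, rfl⟩
  · intro hX
    rcases mem_shP_iff.1 hX with ⟨J, hJ, rfl⟩
    by_cases hJI : J = I
    · subst hJI
      exact Or.inr ⟨rfl, fun h => nonempty_of_mem hϖ hJ (sh_empty_iff.1 h)⟩
    · refine Or.inl ⟨Finset.mem_insert_of_mem (mem_shP_iff.2 ⟨J, Finset.mem_erase.2 ⟨hJI, hJ⟩, rfl⟩), ?_⟩
      intro h
      have : (1 : ℕ) ∈ sh J := by rw [h]; exact Finset.mem_insert_self 1 _
      exact one_not_mem_sh (subset_Icc_of_mem hϖ hJ) this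

lemma unshP_shP (ϖ : Finset (Finset ℕ)) : (shP ϖ).image unsh = ϖ := by
  rw [shP, Finset.image_image]
  have : ∀ X ∈ ϖ, (unsh ∘ sh) X = id X := fun X _ => unsh_sh X
  rw [Finset.image_congr this, Finset.image_id]

lemma down_addSing {n : ℕ} {ϖ : Finset (Finset ℕ)} (hϖ : ϖ ∈ PartsF n) :
    down (addSing ϖ) = ϖ := by
  rw [down, mid_addSing hϖ, unshP_shP]

lemma down_addTo {n : ℕ} {ϖ : Finset (Finset ℕ)} (hϖ : ϖ ∈ PartsF n)
    {I : Finset ℕ} (hI : I ∈ ϖ) : down (addTo ϖ I) = ϖ := by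
  rw [down, mid_addTo hϖ hI, unshP_shP]

lemma opt_addSing {n : ℕ} {ϖ : Finset (Finset ℕ)} (hϖ : ϖ ∈ PartsF n) :
    opt (addSing ϖ) = none := by
  rw [opt, blk1_addSing hϖ, if_pos rfl]

lemma opt_addTo {n : ℕ} {ϖ : Finset (Finset ℕ)} (hϖ : ϖ ∈ PartsF n)
    {I : Finset ℕ} (hI : I ∈ ϖ) : opt (addTo ϖ I) = some I := by
  rw [opt, blk1_addTo hϖ hI, if_neg (insert_one_ne_singleton hϖ hI)]
  have h1sh : (1 : ℕ) ∉ sh I := one_not_mem_sh (subset_Icc_of_mem hϖ hI)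
  rw [Finset.erase_insert h1sh, unsh_sh]

lemma erase_one_ne_empty {n : ℕ} {ϖ' : Finset (Finset ℕ)} (hϖ' : ϖ' ∈ PartsF (n + 1))
    (hKne : blk1 ϖ' ≠ {1}) (hK : blk1 ϖ' ∈ ϖ') (h1 : 1 ∈ blk1 ϖ') :
    (blk1 ϖ').erase 1 ≠ ∅ := by
  intro h
  apply hKne
  apply Finset.Subset.antisymm
  · intro a ha
    by_cases ha1 : a = 1
    · rw [ha1]; exact Finset.mem_singleton_self 1
    · exact absurd (Finset.mem_erase.2 ⟨ha1, ha⟩) (h ▸ Finset.notMem_empty a)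
  · intro a ha
    rw [Finset.mem_singleton] at ha
    rw [ha]; exact h1

lemma erase_one_not_mem {n : ℕ} {ϖ' : Finset (Finset ℕ)} (hϖ' : ϖ' ∈ PartsF (n + 1))
    {K : Finset ℕ} (hK : K ∈ ϖ') (h1 : 1 ∈ K) (hne : K.erase 1 ≠ ∅) :
    K.erase 1 ∉ ϖ' := by
  intro hmem
  have hne' : K.erase 1 ≠ K := Finset.erase_ne_self.2 h1
  have hdis := (mem_PartsF.1 hϖ').2.2 _ hmem _ hK hne'
  rcases Finset.nonempty_iff_ne_empty.2 hne with ⟨a, ha⟩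
  exact Finset.disjoint_left.1 hdis ha (Finset.mem_of_mem_erase ha)

lemma mid_of_blk_singleton {n : ℕ} {ϖ' : Finset (Finset ℕ)} (hϖ' : ϖ' ∈ PartsF (n + 1))
    (hK : ({1} : Finset ℕ) ∈ ϖ') : mid ϖ' = ϖ'.erase {1} := by
  ext X
  rw [mem_mid hϖ' hK (Finset.mem_singleton_self 1), Finset.mem_erase]
  simp only [Finset.erase_singleton]
  constructor
  · rintro (⟨h1, h2⟩ | ⟨rfl, h⟩)
    · exact ⟨h2, h1⟩
    · exact absurd rfl h
  · rintro ⟨h1, h2⟩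
    exact Or.inl ⟨h2, h1⟩

lemma mid_of_blk_ne {n : ℕ} {ϖ' : Finset (Finset ℕ)} (hϖ' : ϖ' ∈ PartsF (n + 1))
    {K : Finset ℕ} (hK : K ∈ ϖ') (h1 : 1 ∈ K) (hne : K.erase 1 ≠ ∅) :
    mid ϖ' = insert (K.erase 1) (ϖ'.erase K) := by
  ext X
  rw [mem_mid hϖ' hK h1, Finset.mem_insert, Finset.mem_erase]
  constructor
  · rintro (⟨h1', h2⟩ | ⟨rfl, h⟩)
    · exact Or.inr ⟨h2, h1'⟩
    · exact Or.inl rfl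
  · rintro (rfl | ⟨h1', h2⟩)
    · exact Or.inr ⟨rfl, hne⟩
    · exact Or.inl ⟨h2, h1'⟩

lemma app_down {n : ℕ} {ϖ' : Finset (Finset ℕ)} (hϖ' : ϖ' ∈ PartsF (n + 1)) :
    app (down ϖ') (opt ϖ') = ϖ' := by
  obtain ⟨hKmem, h1K⟩ := blk1_mem (by omega) hϖ'
  by_cases hsing : blk1 ϖ' = {1}
  · rw [opt, if_pos hsing, app, addSing]
    rw [shP_down hϖ', mid_of_blk_singleton hϖ' (hsing ▸ hKmem)]
    exact Finset.insert_erase (hsing ▸ hKmem)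
  · rw [opt, if_neg hsing, app, addTo]
    have hKe1 : ∀ a ∈ (blk1 ϖ').erase 1, 1 ≤ a := by
      intro a ha
      have := Finset.mem_Icc.1 (subset_Icc_of_mem hϖ' hKmem (Finset.mem_of_mem_erase ha))
      omega
    have hshL : sh (unsh ((blk1 ϖ').erase 1)) = (blk1 ϖ').erase 1 := sh_unsh hKe1
    have hne := erase_one_ne_empty hϖ' hsing hKmem h1K
    have hnotmem : (blk1 ϖ').erase 1 ∉ ϖ'.erase (blk1 ϖ') :=
      fun h => erase_one_not_mem hϖ' hKmem h1K hne (Finset.mem_of_mem_erase h)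
    rw [shP, Finset.image_erase sh_inj, ← shP, shP_down hϖ', hshL,
      Finset.insert_erase h1K, mid_of_blk_ne hϖ' hKmem h1K hne,
      Finset.erase_insert_eq_erase, Finset.erase_eq_of_notMem hnotmem]
    exact Finset.insert_erase hKmem

lemma opt_mem {n : ℕ} {ϖ' : Finset (Finset ℕ)} (hϖ' : ϖ' ∈ PartsF (n + 1)) :
    opt ϖ' ∈ insert none ((down ϖ').image some) := by
  obtain ⟨hKmem, h1K⟩ := blk1_mem (by omega) hϖ'
  by_cases hsing : blk1 ϖ' = {1}
  · rw [opt, if_pos hsing]; exact Finset.mem_insert_self _ _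
  · rw [opt, if_neg hsing]
    refine Finset.mem_insert_of_mem (Finset.mem_image.2 ⟨_, ?_, rfl⟩)
    rw [down]
    refine Finset.mem_image.2 ⟨(blk1 ϖ').erase 1, ?_, rfl⟩
    exact (mem_mid hϖ' hKmem h1K).2 (Or.inr ⟨rfl, erase_one_ne_empty hϖ' hsing hKmem h1K⟩)

/-- The key combinatorial splitting of the sum over partitions of `{1,...,n+1}`. -/
lemma sum_split (n : ℕ) (g : Finset (Finset ℕ) → ℝ) :
    ∑ ϖ' ∈ PartsF (n + 1), g ϖ' =
      ∑ ϖ ∈ PartsF n, (g (addSing ϖ) + ∑ I ∈ ϖ, g (addTo ϖ I)) := by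
  have hRHS : ∀ ϖ ∈ PartsF n,
      g (addSing ϖ) + ∑ I ∈ ϖ, g (addTo ϖ I)
        = ∑ o ∈ insert none (ϖ.image some), g (app ϖ o) := by
    intro ϖ hϖ
    rw [Finset.sum_insert (by simp)]
    congr 1
    rw [Finset.sum_image (fun a _ b _ h => Option.some_injective _ h)]
    rfl
  rw [Finset.sum_congr rfl hRHS, ← Finset.sum_sigma (PartsF n)
    (fun ϖ => insert none (ϖ.image some)) (fun p => g (app p.1 p.2))]
  symm
  refine Finset.sum_nbij' (i := fun p => app p.1 p.2) (j := fun ϖ' => ⟨down ϖ', opt ϖ'⟩)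
    ?_ ?_ ?_ ?_ ?_
  · rintro ⟨ϖ, o⟩ hp
    rcases Finset.mem_sigma.1 hp with ⟨hϖ, ho⟩
    rcases Finset.mem_insert.1 ho with rfl | hsome
    · exact addSing_mem hϖ
    · rcases Finset.mem_image.1 hsome with ⟨I, hI, rfl⟩
      exact addTo_mem hϖ hI
  · intro ϖ' hϖ'
    exact Finset.mem_sigma.2 ⟨down_mem hϖ', opt_mem hϖ'⟩
  · rintro ⟨ϖ, o⟩ hp
    rcases Finset.mem_sigma.1 hp with ⟨hϖ, ho⟩
    rcases Finset.mem_insert.1 ho with rfl | hsome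
    · show (⟨down (addSing ϖ), opt (addSing ϖ)⟩ : Σ _ : Finset (Finset ℕ), Option (Finset ℕ))
        = ⟨ϖ, none⟩
      rw [down_addSing hϖ, opt_addSing hϖ]
    · rcases Finset.mem_image.1 hsome with ⟨I, hI, rfl⟩
      show (⟨down (addTo ϖ I), opt (addTo ϖ I)⟩ : Σ _ : Finset (Finset ℕ), Option (Finset ℕ))
        = ⟨ϖ, some I⟩
      rw [down_addTo hϖ hI, opt_addTo hϖ hI]
  · intro ϖ' hϖ'
    exact app_down hϖ'
  · rintro ⟨ϖ, o⟩ _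
    rfl

lemma sh_nonempty {I : Finset ℕ} (hI : I.Nonempty) : (sh I).Nonempty :=
  hI.image _

lemma sInf_sh {I : Finset ℕ} (hI : I.Nonempty) :
    sInf ((sh I : Finset ℕ) : Set ℕ) = sInf (I : Set ℕ) + 1 := by
  have hm : sInf (I : Set ℕ) ∈ (I : Set ℕ) := Nat.sInf_mem (Finset.coe_nonempty.2 hI)
  apply le_antisymm
  · exact Nat.sInf_le (Finset.mem_coe.2 (mem_sh.2 ⟨_, Finset.mem_coe.1 hm, rfl⟩))
  · have h2 : sInf ((sh I : Finset ℕ) : Set ℕ) ∈ ((sh I : Finset ℕ) : Set ℕ) :=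
      Nat.sInf_mem (Finset.coe_nonempty.2 (sh_nonempty hI))
    rcases mem_sh.1 (Finset.mem_coe.1 h2) with ⟨b, hb, heq⟩
    have hle : sInf (I : Set ℕ) ≤ b := Nat.sInf_le (Finset.mem_coe.2 hb)
    omega

lemma sSup_sh {I : Finset ℕ} (hI : I.Nonempty) :
    sSup ((sh I : Finset ℕ) : Set ℕ) = sSup (I : Set ℕ) + 1 := by
  have hbdd : BddAbove (I : Set ℕ) := (I.finite_toSet).bddAbove
  have hbdd' : BddAbove ((sh I : Finset ℕ) : Set ℕ) := ((sh I).finite_toSet).bddAbove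
  have hm : sSup (I : Set ℕ) ∈ (I : Set ℕ) := Nat.sSup_mem (Finset.coe_nonempty.2 hI) hbdd
  apply le_antisymm
  · have h2 : sSup ((sh I : Finset ℕ) : Set ℕ) ∈ ((sh I : Finset ℕ) : Set ℕ) :=
      Nat.sSup_mem (Finset.coe_nonempty.2 (sh_nonempty hI)) hbdd'
    rcases mem_sh.1 (Finset.mem_coe.1 h2) with ⟨b, hb, heq⟩
    have hle : b ≤ sSup (I : Set ℕ) := le_csSup hbdd (Finset.mem_coe.2 hb)
    omega
  · exact le_csSup hbdd' (Finset.mem_coe.2 (mem_sh.2 ⟨_, Finset.mem_coe.1 hm, rfl⟩))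

lemma sInf_insert_one_sh (I : Finset ℕ) :
    sInf ((insert 1 (sh I) : Finset ℕ) : Set ℕ) = 1 := by
  apply le_antisymm
  · exact Nat.sInf_le (Finset.mem_coe.2 (Finset.mem_insert_self 1 _))
  · have h2 : sInf ((insert 1 (sh I) : Finset ℕ) : Set ℕ)
        ∈ ((insert 1 (sh I) : Finset ℕ) : Set ℕ) :=
      Nat.sInf_mem (Finset.coe_nonempty.2 (Finset.insert_nonempty 1 _))
    rcases Finset.mem_insert.1 (Finset.mem_coe.1 h2) with h | h
    · omega
    · exact one_le_of_mem_sh h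

lemma sSup_insert_one_sh {I : Finset ℕ} (hI : I.Nonempty) :
    sSup ((insert 1 (sh I) : Finset ℕ) : Set ℕ) = sSup (I : Set ℕ) + 1 := by
  have hbdd : BddAbove (I : Set ℕ) := (I.finite_toSet).bddAbove
  have hbdd' : BddAbove ((insert 1 (sh I) : Finset ℕ) : Set ℕ) :=
    ((insert 1 (sh I)).finite_toSet).bddAbove
  have hm : sSup (I : Set ℕ) ∈ (I : Set ℕ) := Nat.sSup_mem (Finset.coe_nonempty.2 hI) hbdd
  apply le_antisymm
  · have h2 : sSup ((insert 1 (sh I) : Finset ℕ) : Set ℕ)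
        ∈ ((insert 1 (sh I) : Finset ℕ) : Set ℕ) :=
      Nat.sSup_mem (Finset.coe_nonempty.2 (Finset.insert_nonempty 1 _)) hbdd'
    rcases Finset.mem_insert.1 (Finset.mem_coe.1 h2) with h | h
    · omega
    · rcases mem_sh.1 h with ⟨b, hb, heq⟩
      have hle : b ≤ sSup (I : Set ℕ) := le_csSup hbdd (Finset.mem_coe.2 hb)
      omega
  · refine le_csSup hbdd' (Finset.mem_coe.2 (Finset.mem_insert_of_mem
      (mem_sh.2 ⟨_, Finset.mem_coe.1 hm, rfl⟩)))

lemma sInf_coe_singleton (a : ℕ) : sInf (({a} : Finset ℕ) : Set ℕ) = a := by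
  rw [Finset.coe_singleton, csInf_singleton]

lemma sSup_coe_singleton (a : ℕ) : sSup (({a} : Finset ℕ) : Set ℕ) = a := by
  rw [Finset.coe_singleton, csSup_singleton]

lemma card_shP (ϖ : Finset (Finset ℕ)) : (shP ϖ).card = ϖ.card :=
  Finset.card_image_of_injective _ sh_inj

lemma card_addSing {n : ℕ} {ϖ : Finset (Finset ℕ)} (hϖ : ϖ ∈ PartsF n) :
    (addSing ϖ).card = ϖ.card + 1 := by
  rw [addSing, Finset.card_insert_of_notMem (singleton_one_not_mem_shP hϖ), card_shP]

lemma insert_one_sh_not_mem_shP {n : ℕ} {ϖ : Finset (Finset ℕ)} (hϖ : ϖ ∈ PartsF n)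
    {I : Finset ℕ} {s : Finset (Finset ℕ)} (hs : s ⊆ ϖ) :
    insert 1 (sh I) ∉ shP s := by
  intro h
  rcases mem_shP_iff.1 h with ⟨J, hJ, hsh⟩
  have : (1 : ℕ) ∈ sh J := by rw [hsh]; exact Finset.mem_insert_self 1 _
  exact one_not_mem_sh (subset_Icc_of_mem hϖ (hs hJ)) this

lemma card_addTo {n : ℕ} {ϖ : Finset (Finset ℕ)} (hϖ : ϖ ∈ PartsF n)
    {I : Finset ℕ} (hI : I ∈ ϖ) : (addTo ϖ I).card = ϖ.card := by
  rw [addTo, Finset.card_insert_of_notMem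
    (insert_one_sh_not_mem_shP hϖ (Finset.erase_subset I ϖ)), card_shP,
    Finset.card_erase_of_mem hI]
  have : 1 ≤ ϖ.card := Finset.card_pos.2 ⟨I, hI⟩
  omega

lemma card_insert_one_sh {n : ℕ} {I : Finset ℕ} (hI : I ⊆ Finset.Icc 1 n) :
    (insert 1 (sh I)).card = I.card + 1 := by
  rw [Finset.card_insert_of_notMem (one_not_mem_sh hI), card_sh]

lemma prod_addSing {n : ℕ} {ϖ : Finset (Finset ℕ)} (hϖ : ϖ ∈ PartsF n)
    (f : Finset ℕ → ℝ) :
    ∏ J ∈ addSing ϖ, f J = f {1} * ∏ I ∈ ϖ, f (sh I) := by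
  rw [addSing, Finset.prod_insert (singleton_one_not_mem_shP hϖ), shP,
    Finset.prod_image (fun a _ b _ h => sh_inj h)]

lemma prod_addTo {n : ℕ} {ϖ : Finset (Finset ℕ)} (hϖ : ϖ ∈ PartsF n)
    {I : Finset ℕ} (hI : I ∈ ϖ) (f : Finset ℕ → ℝ) :
    ∏ J ∈ addTo ϖ I, f J = f (insert 1 (sh I)) * ∏ J ∈ ϖ.erase I, f (sh J) := by
  rw [addTo, Finset.prod_insert
    (insert_one_sh_not_mem_shP hϖ (Finset.erase_subset I ϖ)), shP,
    Finset.prod_image (fun a _ b _ h => sh_inj h)]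

section Analytic

open scoped RealInnerProductSpace

variable {H : Type*} [NormedAddCommGroup H] [InnerProductSpace ℝ H]

/-- The factor associated to a block. -/
noncomputable def tm (P : H →L[ℝ] H) (x : H) (u : ℕ → H) (I : Finset ℕ) : ℝ :=
  if I.card = 1 then (inner ℝ (P x) (u (sInf (I : Set ℕ))) : ℝ)
  else if I.card = 2 then
    (inner ℝ (P (u (sSup (I : Set ℕ)))) (u (sInf (I : Set ℕ))) : ℝ)
  else 0

lemma tm_sh (P : H →L[ℝ] H) (x : H) (u : ℕ → H) {I : Finset ℕ} (hI : I.Nonempty) :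
    tm P x u (sh I) = tm P x (fun k => u (k + 1)) I := by
  rw [tm, tm, card_sh, sInf_sh hI, sSup_sh hI]

lemma tm_singleton_one (P : H →L[ℝ] H) (x : H) (u : ℕ → H) :
    tm P x u {1} = (inner ℝ (P x) (u 1) : ℝ) := by
  rw [tm, if_pos (Finset.card_singleton 1), sInf_coe_singleton]

lemma tm_insert_one (P : H →L[ℝ] H) (x : H) (u : ℕ → H) {n : ℕ} {I : Finset ℕ}
    (hsub : I ⊆ Finset.Icc 1 n) (hne : I.Nonempty) :
    tm P x u (insert 1 (sh I)) =
      if I.card = 1 then (inner ℝ (P (u (sInf (I : Set ℕ) + 1))) (u 1) : ℝ) else 0 := by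
  rw [tm, card_insert_one_sh hsub]
  have hpos : 1 ≤ I.card := Finset.card_pos.2 hne
  rw [if_neg (by omega)]
  by_cases h : I.card = 1
  · rw [if_pos (by omega), if_pos h, sSup_insert_one_sh hne, sInf_insert_one_sh]
    rcases Finset.card_eq_one.1 h with ⟨a, rfl⟩
    rw [sSup_coe_singleton, sInf_coe_singleton]
  · rw [if_neg (by omega), if_neg h]

end Analytic

end Stmt4

open Stmt4 in
open scoped RealInnerProductSpace in
theorem stmt_4 {H : Type*} [NormedAddCommGroup H] [InnerProductSpace ℝ H]
    [CompleteSpace H] (P : H →L[ℝ] H)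
    (hidem : ∀ x : H, P (P x) = P x)
    (hsa : ∀ x y : H, (inner ℝ (P x) y : ℝ) = inner ℝ x (P y))
    (n : ℕ) (hn : 1 ≤ n) (v₀ : H) (v : ℕ → H) :
    iteratedFDeriv ℝ n (fun w : H => Real.sqrt (1 + ‖P w‖ ^ 2)) v₀
        (fun i : Fin n => v ((i : ℕ) + 1)) =
      ∑ ϖ ∈ PartsF n,
        ((∏ i ∈ Finset.range ϖ.card, (1 - 2 * (i : ℝ))) *
          ∏ I ∈ ϖ,
            (if I.card = 1 then (inner ℝ (P v₀) (v (sInf (I : Set ℕ))) : ℝ)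
             else if I.card = 2 then
               (inner ℝ (P (v (sSup (I : Set ℕ)))) (v (sInf (I : Set ℕ))) : ℝ)
             else 0)) /
          (1 + ‖P v₀‖ ^ 2) ^ ((ϖ.card : ℝ) - 1 / 2) := by
  classical
  have hQpos : ∀ y : H, (0 : ℝ) < 1 + ‖P y‖ ^ 2 := fun y => by positivity
  have hB : ContDiff ℝ (⊤ : ℕ∞) (fun w : H => Real.sqrt (1 + ‖P w‖ ^ 2)) := by
    rw [contDiff_iff_contDiffAt]
    intro x
    exact (Real.contDiffAt_sqrt (ne_of_gt (hQpos x))).comp x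
      ((contDiff_const.add (P.contDiff.norm_sq (𝕜 := ℝ))).contDiffAt)
  have hPP : ∀ x u : H, (inner ℝ (P x) (P u) : ℝ) = inner ℝ (P x) u := fun x u => by
    rw [hsa x (P u), hidem u, ← hsa x u]
  have hQ' : ∀ y : H, HasFDerivAt (fun y : H => 1 + ‖P y‖ ^ 2)
      (2 • (innerSL ℝ (P y)).comp (P : H →L[ℝ] H)) y :=
    fun y => (P.hasFDerivAt.norm_sq).const_add 1
  induction n, hn using Nat.le_induction generalizing v₀ v with
  | base =>
    rw [show PartsF 1 = {{{1}}} from by decide, Finset.sum_singleton]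
    have hcard : ({{1}} : Finset (Finset ℕ)).card = 1 := rfl
    rw [hcard]
    rw [Finset.prod_singleton, Finset.prod_range_one]
    have hB1 : HasFDerivAt (fun w : H => Real.sqrt (1 + ‖P w‖ ^ 2))
        ((1 / (2 * Real.sqrt (1 + ‖P v₀‖ ^ 2))) • (2 • (innerSL ℝ (P v₀)).comp (P : H →L[ℝ] H)))
        v₀ := (hQ' v₀).sqrt (ne_of_gt (hQpos v₀))
    rw [iteratedFDeriv_one_apply, hB1.fderiv]
    have h1 : sInf (({1} : Finset ℕ) : Set ℕ) = 1 := sInf_coe_singleton 1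
    rw [h1]
    simp only [Finset.card_singleton, if_pos rfl]
    rw [ContinuousLinearMap.smul_apply]
    have happ : ((2 • (innerSL ℝ (P v₀)).comp (P : H →L[ℝ] H)) : H →L[ℝ] ℝ) (v 1)
        = 2 * (inner ℝ (P v₀) (v 1) : ℝ) := by
      simp [hPP]
    simp only [Fin.val_zero, zero_add]
    rw [happ, smul_eq_mul]
    have hs : Real.sqrt (1 + ‖P v₀‖ ^ 2) ≠ 0 := Real.sqrt_ne_zero'.2 (hQpos v₀)
    rw [show ((1 : ℕ) : ℝ) - 1 / 2 = 1 / 2 by norm_num, ← Real.sqrt_eq_rpow]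
    norm_num
    field_simp
  | succ n hn IH =>
    -- Step 1: peel off the first argument
    have hdiffit : Differentiable ℝ
        (iteratedFDeriv ℝ n (fun w : H => Real.sqrt (1 + ‖P w‖ ^ 2))) :=
      hB.differentiable_iteratedFDeriv (by exact_mod_cast WithTop.coe_lt_top n)
    have hpeel : iteratedFDeriv ℝ (n + 1) (fun w : H => Real.sqrt (1 + ‖P w‖ ^ 2)) v₀
        (fun i : Fin (n + 1) => v ((i : ℕ) + 1))
        = fderiv ℝ (fun y => iteratedFDeriv ℝ n (fun w : H => Real.sqrt (1 + ‖P w‖ ^ 2)) y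
            (fun i : Fin n => v ((i : ℕ) + 1 + 1))) v₀ (v 1) := by
      rw [iteratedFDeriv_succ_apply_left]
      exact (fderiv_continuousMultilinear_apply_const_apply (hdiffit v₀)
        (Fin.tail fun i : Fin (n + 1) => v ((i : ℕ) + 1)) (v 1)).symm
    -- Step 2: rewrite the inner function via the induction hypothesis
    have hIH : (fun y => iteratedFDeriv ℝ n (fun w : H => Real.sqrt (1 + ‖P w‖ ^ 2)) y
        (fun i : Fin n => v ((i : ℕ) + 1 + 1)))
        = fun y => ∑ ϖ ∈ PartsF n,
            ((∏ i ∈ Finset.range ϖ.card, (1 - 2 * (i : ℝ))) *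
              ∏ I ∈ ϖ, tm P y (fun k => v (k + 1)) I) /
              (1 + ‖P y‖ ^ 2) ^ ((ϖ.card : ℝ) - 1 / 2) := by
      funext y
      exact IH y (fun k => v (k + 1))
    -- Step 3: derivative of each block factor
    have hterm : ∀ I : Finset ℕ, HasFDerivAt (fun y => tm P y (fun k => v (k + 1)) I)
        (if I.card = 1 then (innerSL ℝ (v (sInf (I : Set ℕ) + 1))).comp (P : H →L[ℝ] H)
         else (0 : H →L[ℝ] ℝ)) v₀ := by
      intro I
      by_cases h : I.card = 1
      · rw [if_pos h]
        have heq : (fun y => tm P y (fun k => v (k + 1)) I)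
            = fun y => ((innerSL ℝ (v (sInf (I : Set ℕ) + 1))).comp (P : H →L[ℝ] H)) y := by
          funext y
          rw [tm, if_pos h]
          simp only [ContinuousLinearMap.coe_comp', Function.comp_apply, innerSL_apply_apply]
          exact real_inner_comm _ _
        rw [heq]
        exact ((innerSL ℝ _).comp _).hasFDerivAt
      · rw [if_neg h]
        have heq : (fun y => tm P y (fun k => v (k + 1)) I)
            = fun _ => tm P v₀ (fun k => v (k + 1)) I := by
          funext y; rw [tm, tm, if_neg h, if_neg h]
        rw [heq]
        exact hasFDerivAt_const _ _
    -- Step 4: derivative of the full sum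
    have hder : HasFDerivAt (fun y => ∑ ϖ ∈ PartsF n,
        ((∏ i ∈ Finset.range ϖ.card, (1 - 2 * (i : ℝ))) *
          ∏ I ∈ ϖ, tm P y (fun k => v (k + 1)) I) /
          (1 + ‖P y‖ ^ 2) ^ ((ϖ.card : ℝ) - 1 / 2))
        (∑ ϖ ∈ PartsF n,
          (((∏ i ∈ Finset.range ϖ.card, (1 - 2 * (i : ℝ))) *
              ∏ I ∈ ϖ, tm P v₀ (fun k => v (k + 1)) I) •
            ((-((ϖ.card : ℝ) - 1 / 2) *
                (1 + ‖P v₀‖ ^ 2) ^ (-((ϖ.card : ℝ) - 1 / 2) - 1)) •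
              (2 • (innerSL ℝ (P v₀)).comp (P : H →L[ℝ] H)))
          + ((1 + ‖P v₀‖ ^ 2) ^ (-((ϖ.card : ℝ) - 1 / 2))) •
            ((∏ i ∈ Finset.range ϖ.card, (1 - 2 * (i : ℝ))) •
              ∑ I ∈ ϖ, (∏ J ∈ ϖ.erase I, tm P v₀ (fun k => v (k + 1)) J) •
                (if I.card = 1 then
                  (innerSL ℝ (v (sInf (I : Set ℕ) + 1))).comp (P : H →L[ℝ] H)
                 else (0 : H →L[ℝ] ℝ))))) v₀ := by
      apply HasFDerivAt.fun_sum
      intro ϖ _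
      have hN : HasFDerivAt (fun y => ∏ I ∈ ϖ, tm P y (fun k => v (k + 1)) I)
          (∑ I ∈ ϖ, (∏ J ∈ ϖ.erase I, tm P v₀ (fun k => v (k + 1)) J) •
            (if I.card = 1 then
              (innerSL ℝ (v (sInf (I : Set ℕ) + 1))).comp (P : H →L[ℝ] H)
             else (0 : H →L[ℝ] ℝ))) v₀ :=
        HasFDerivAt.finset_prod (fun I _ => hterm I)
      have hQr : HasFDerivAt
          (fun y : H => (1 + ‖P y‖ ^ 2) ^ (-((ϖ.card : ℝ) - 1 / 2)))
          ((-((ϖ.card : ℝ) - 1 / 2) *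
              (1 + ‖P v₀‖ ^ 2) ^ (-((ϖ.card : ℝ) - 1 / 2) - 1)) •
            (2 • (innerSL ℝ (P v₀)).comp (P : H →L[ℝ] H))) v₀ :=
        (hQ' v₀).rpow_const (Or.inl (ne_of_gt (hQpos v₀)))
      have hmul := (hN.const_mul (∏ i ∈ Finset.range ϖ.card, (1 - 2 * (i : ℝ)))).mul hQr
      have hfun : (fun y : H =>
          ((∏ i ∈ Finset.range ϖ.card, (1 - 2 * (i : ℝ))) *
            ∏ I ∈ ϖ, tm P y (fun k => v (k + 1)) I) /
            (1 + ‖P y‖ ^ 2) ^ ((ϖ.card : ℝ) - 1 / 2))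
          = fun y : H =>
          ((∏ i ∈ Finset.range ϖ.card, (1 - 2 * (i : ℝ))) *
            ∏ I ∈ ϖ, tm P y (fun k => v (k + 1)) I) *
            (1 + ‖P y‖ ^ 2) ^ (-((ϖ.card : ℝ) - 1 / 2)) := by
        funext y
        rw [Real.rpow_neg (hQpos y).le, div_eq_mul_inv]
      rw [hfun]
      exact hmul
    rw [hpeel, hIH, hder.fderiv, ContinuousLinearMap.sum_apply, sum_split n]
    refine Finset.sum_congr rfl ?_
    intro ϖ hϖ
    have hne : ∀ I ∈ ϖ, I.Nonempty := fun I hI =>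
      Finset.nonempty_iff_ne_empty.2 (nonempty_of_mem hϖ hI)
    have hfold : ∀ I : Finset ℕ,
        (if I.card = 1 then (inner ℝ (P v₀) (v (sInf (I : Set ℕ))) : ℝ)
         else if I.card = 2 then
           (inner ℝ (P (v (sSup (I : Set ℕ)))) (v (sInf (I : Set ℕ))) : ℝ)
         else 0) = tm P v₀ v I := fun I => rfl
    simp only [hfold]
    rw [card_addSing hϖ, prod_addSing hϖ (tm P v₀ v), tm_singleton_one,
      Finset.prod_congr rfl (fun I hI => tm_sh P v₀ v (hne I hI)),
      Finset.prod_range_succ]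
    have hA : ∀ I ∈ ϖ,
        ((∏ i ∈ Finset.range (addTo ϖ I).card, (1 - 2 * (i : ℝ))) *
            ∏ J ∈ addTo ϖ I, tm P v₀ v J) /
          (1 + ‖P v₀‖ ^ 2) ^ (((addTo ϖ I).card : ℝ) - 1 / 2)
        = ((∏ i ∈ Finset.range ϖ.card, (1 - 2 * (i : ℝ))) *
            ((if I.card = 1 then (inner ℝ (P (v (sInf (I : Set ℕ) + 1))) (v 1) : ℝ) else 0) *
              ∏ J ∈ ϖ.erase I, tm P v₀ (fun k => v (k + 1)) J)) /
          (1 + ‖P v₀‖ ^ 2) ^ ((ϖ.card : ℝ) - 1 / 2) := by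
      intro I hI
      rw [card_addTo hϖ hI, prod_addTo hϖ hI (tm P v₀ v),
        tm_insert_one P v₀ v (subset_Icc_of_mem hϖ hI) (hne I hI),
        Finset.prod_congr rfl (fun J hJ => tm_sh P v₀ v (hne J (Finset.mem_of_mem_erase hJ)))]
    rw [Finset.sum_congr rfl hA]
    simp only [ContinuousLinearMap.add_apply, ContinuousLinearMap.smul_apply,
      ContinuousLinearMap.sum_apply, ContinuousLinearMap.coe_comp', Function.comp_apply,
      innerSL_apply_apply, smul_eq_mul, nsmul_eq_mul, Nat.cast_ofNat,
      apply_ite (fun T : H →L[ℝ] ℝ => T (v 1)), ContinuousLinearMap.zero_apply]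
    rw [hPP v₀ (v 1)]
    have hip : ∀ I : Finset ℕ,
        (if I.card = 1 then (inner ℝ (P (v (sInf (I : Set ℕ) + 1))) (v 1) : ℝ) else 0)
          = (if I.card = 1 then (inner ℝ (v (sInf (I : Set ℕ) + 1)) (P (v 1)) : ℝ) else 0) := by
      intro I
      split_ifs with h
      · exact hsa _ _
      · rfl
    simp only [hip]
    have he1 : (1 + ‖P v₀‖ ^ 2) ^ (-((ϖ.card : ℝ) - 1 / 2) - 1)
        = ((1 + ‖P v₀‖ ^ 2) ^ (((ϖ.card + 1 : ℕ) : ℝ) - 1 / 2))⁻¹ := by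
      rw [show -((ϖ.card : ℝ) - 1 / 2) - 1 = -(((ϖ.card + 1 : ℕ) : ℝ) - 1 / 2) by
        push_cast; ring, Real.rpow_neg (hQpos v₀).le]
    have he2 : (1 + ‖P v₀‖ ^ 2) ^ (-((ϖ.card : ℝ) - 1 / 2))
        = ((1 + ‖P v₀‖ ^ 2) ^ ((ϖ.card : ℝ) - 1 / 2))⁻¹ :=
      Real.rpow_neg (hQpos v₀).le _
    rw [he1, he2]
    simp only [div_eq_mul_inv]
    have hsum2 : ∑ I ∈ ϖ,
        (∏ i ∈ Finset.range ϖ.card, (1 - 2 * (i : ℝ))) *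
          ((if I.card = 1 then (inner ℝ (v (sInf (I : Set ℕ) + 1)) (P (v 1)) : ℝ) else 0) *
            ∏ J ∈ ϖ.erase I, tm P v₀ (fun k => v (k + 1)) J) *
          ((1 + ‖P v₀‖ ^ 2) ^ ((ϖ.card : ℝ) - 1 / 2))⁻¹
        = ((1 + ‖P v₀‖ ^ 2) ^ ((ϖ.card : ℝ) - 1 / 2))⁻¹ *
            ((∏ i ∈ Finset.range ϖ.card, (1 - 2 * (i : ℝ))) *
              ∑ I ∈ ϖ, (∏ J ∈ ϖ.erase I, tm P v₀ (fun k => v (k + 1)) J) *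
                (if I.card = 1 then (inner ℝ (v (sInf (I : Set ℕ) + 1)) (P (v 1)) : ℝ) else 0)) := by
      rw [Finset.mul_sum, Finset.mul_sum]
      exact Finset.sum_congr rfl (fun I _ => by ring)
    simp only [div_eq_mul_inv] at hsum2
    rw [hsum2]
    ring
end

section
/- Let c > 0, t ≥ 0, ε ∈ (0, 1/4), and let m ∈ ℕ₀ satisfy m ≥ 1/(4ε) − 1. Then for all N, n ∈ ℕ and all i ∈ {1,...,n} it holds that Σ_{j=1}^{N} e^{−2tc(i + j n N^m)²} · (c (i + j n N^m)²)^{−2ε} ≤ 1/(c^{2ε}(1 − 4ε)). -/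
open Real Finset

lemma aux_bernoulli {p x : ℝ} (hp0 : 0 < p) (hp1 : p ≤ 1) (hx : 1 ≤ x) :
    p * x ^ (p - 1) ≤ x ^ p - (x - 1) ^ p := by
  have hx0 : 0 < x := lt_of_lt_of_le one_pos hx
  have hs : -1 ≤ -(1/x) := by
    have : 1/x ≤ 1 := by rw [div_le_one hx0]; exact hx
    linarith
  have h := rpow_one_add_le_one_add_mul_self hs hp0.le hp1
  -- h : (1 + -(1/x)) ^ p ≤ 1 + p * -(1/x)
  have key : (x - 1) ^ p ≤ x ^ p - p * x ^ (p - 1) := by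
    have h1 : (x - 1 : ℝ) = x * (1 + -(1/x)) := by field_simp; ring
    have h2 : (x * (1 + -(1/x))) ^ p = x ^ p * (1 + -(1/x)) ^ p :=
      Real.mul_rpow hx0.le (by nlinarith [hs])
    have h3 : x ^ p * (1 + -(1/x)) ^ p ≤ x ^ p * (1 + p * -(1/x)) :=
      mul_le_mul_of_nonneg_left h (Real.rpow_nonneg hx0.le p)
    have h4 : x ^ p * (1 + p * -(1/x)) = x ^ p - p * (x ^ p / x) := by
      field_simp; ring
    have h5 : x ^ p / x = x ^ (p - 1) := by
      rw [Real.rpow_sub hx0, Real.rpow_one]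
    rw [h1, h2]
    rw [h4, h5] at h3
    exact h3
  linarith

lemma aux_sum_rpow {p : ℝ} (hp0 : 0 < p) (hp1 : p ≤ 1) (N : ℕ) :
    ∑ j ∈ Finset.Icc 1 N, (j : ℝ) ^ (p - 1) ≤ (N : ℝ) ^ p / p := by
  rw [le_div_iff₀ hp0, Finset.sum_mul]
  calc ∑ j ∈ Finset.Icc 1 N, (j:ℝ) ^ (p-1) * p
      ≤ ∑ j ∈ Finset.Icc 1 N, ((j:ℝ) ^ p - ((j:ℝ) - 1) ^ p) := by
        apply Finset.sum_le_sum
        intro j hj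
        have hj1 : (1:ℝ) ≤ j := by
          exact_mod_cast (Finset.mem_Icc.mp hj).1
        have := aux_bernoulli hp0 hp1 hj1
        linarith
    _ = ∑ i ∈ Finset.range N, (((i:ℝ)+1) ^ p - (i:ℝ) ^ p) := by
        rw [← Finset.Ico_add_one_right_eq_Icc, Finset.sum_Ico_eq_sum_range]
        simp only [Nat.add_sub_cancel]
        apply Finset.sum_congr rfl
        intro i _
        push_cast
        ring_nf
    _ = (N:ℝ) ^ p - (0:ℝ) ^ p := by
        have := Finset.sum_range_sub (fun i : ℕ => ((i:ℝ)) ^ p) N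
        simpa using this
    _ ≤ (N:ℝ) ^ p := by
        have : (0:ℝ) ^ p = 0 := Real.zero_rpow hp0.ne'
        simp [this]

theorem stmt_8 (c t ε : ℝ) (hc : 0 < c) (ht : 0 ≤ t) (hε : 0 < ε) (hε' : ε < 1 / 4)
    (m : ℕ) (hm : 1 / (4 * ε) - 1 ≤ (m : ℝ)) (N n i : ℕ) (hN : 1 ≤ N)
    (hn : 1 ≤ n) (hi : i ∈ Finset.Icc 1 n) :
    ∑ j ∈ Finset.Icc 1 N,
        Real.exp (-(2 * t * c * ((i + j * n * N ^ m : ℕ) : ℝ) ^ 2)) *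
          (c * ((i + j * n * N ^ m : ℕ) : ℝ) ^ 2) ^ (-(2 * ε)) ≤
      1 / (c ^ (2 * ε) * (1 - 4 * ε)) := by
  have hp0 : (0:ℝ) < 1 - 4 * ε := by linarith
  have hN0 : (0:ℝ) < (N:ℝ) := by exact_mod_cast hN
  have hNm0 : (0:ℝ) < (N:ℝ) ^ m := by positivity
  calc ∑ j ∈ Finset.Icc 1 N,
        Real.exp (-(2 * t * c * ((i + j * n * N ^ m : ℕ) : ℝ) ^ 2)) *
          (c * ((i + j * n * N ^ m : ℕ) : ℝ) ^ 2) ^ (-(2 * ε))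
      ≤ ∑ j ∈ Finset.Icc 1 N,
          c ^ (-(2 * ε)) * ((N:ℝ)^m) ^ (-(4 * ε)) * (j:ℝ) ^ (-(4 * ε)) := by
        apply Finset.sum_le_sum
        intro j hj
        have hj1 : 1 ≤ j := (Finset.mem_Icc.mp hj).1
        have hi1 : 1 ≤ i := (Finset.mem_Icc.mp hi).1
        set A : ℝ := ((i + j * n * N ^ m : ℕ) : ℝ) with hA
        have hA1 : (j:ℝ) * (N:ℝ)^m ≤ A := by
          rw [hA]; push_cast
          have hj1' : (1:ℝ) ≤ (j:ℝ) := by exact_mod_cast hj1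
          have hn1' : (1:ℝ) ≤ (n:ℝ) := by exact_mod_cast hn
          have hi1' : (1:ℝ) ≤ (i:ℝ) := by exact_mod_cast hi1
          nlinarith [hNm0, mul_pos (lt_of_lt_of_le one_pos hj1') hNm0]
        have hjNm : (0:ℝ) < (j:ℝ) * (N:ℝ)^m := by
          have : (0:ℝ) < (j:ℝ) := by exact_mod_cast hj1
          positivity
        have hA0 : 0 < A := lt_of_lt_of_le hjNm hA1
        have hexp : Real.exp (-(2 * t * c * A ^ 2)) ≤ 1 := by
          apply Real.exp_le_one_iff.mpr
          have : 0 ≤ 2 * t * c * A ^ 2 := by positivity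
          linarith
        have hterm : (c * A ^ 2) ^ (-(2 * ε))
            = c ^ (-(2 * ε)) * (A ^ 2) ^ (-(2 * ε)) :=
          Real.mul_rpow hc.le (sq_nonneg A)
        have hsq : (A ^ 2 : ℝ) ^ (-(2 * ε)) = A ^ (-(4 * ε)) := by
          rw [← Real.rpow_natCast A 2, ← Real.rpow_mul hA0.le]
          norm_num
          ring_nf
        have hmono : A ^ (-(4 * ε)) ≤ ((j:ℝ) * (N:ℝ)^m) ^ (-(4 * ε)) :=
          Real.rpow_le_rpow_of_nonpos hjNm hA1 (by linarith)
        have hsplit : ((j:ℝ) * (N:ℝ)^m) ^ (-(4 * ε))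
            = (j:ℝ) ^ (-(4 * ε)) * ((N:ℝ)^m) ^ (-(4 * ε)) :=
          Real.mul_rpow (by positivity) hNm0.le
        calc Real.exp (-(2 * t * c * A ^ 2)) * (c * A ^ 2) ^ (-(2 * ε))
            ≤ 1 * (c * A ^ 2) ^ (-(2 * ε)) := by
              apply mul_le_mul_of_nonneg_right hexp (Real.rpow_nonneg (by positivity) _)
          _ = c ^ (-(2 * ε)) * (A ^ (-(4 * ε))) := by rw [one_mul, hterm, hsq]
          _ ≤ c ^ (-(2 * ε)) * (((j:ℝ) * (N:ℝ)^m) ^ (-(4 * ε))) := by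
              exact mul_le_mul_of_nonneg_left hmono (Real.rpow_nonneg hc.le _)
          _ = c ^ (-(2 * ε)) * ((N:ℝ)^m) ^ (-(4 * ε)) * (j:ℝ) ^ (-(4 * ε)) := by
              rw [hsplit]; ring
    _ = c ^ (-(2 * ε)) * ((N:ℝ)^m) ^ (-(4 * ε)) *
          ∑ j ∈ Finset.Icc 1 N, (j:ℝ) ^ (-(4 * ε)) := by rw [← Finset.mul_sum]
    _ ≤ c ^ (-(2 * ε)) * ((N:ℝ)^m) ^ (-(4 * ε)) * ((N:ℝ) ^ (1 - 4*ε) / (1 - 4*ε)) := by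
        apply mul_le_mul_of_nonneg_left _ (by positivity)
        have := aux_sum_rpow hp0 (by linarith) N
        have he : (1 - 4*ε) - 1 = -(4 * ε) := by ring
        rw [he] at this
        exact this
    _ ≤ c ^ (-(2 * ε)) * (1 / (1 - 4*ε)) := by
        have key : ((N:ℝ)^m) ^ (-(4 * ε)) * (N:ℝ) ^ (1 - 4*ε) ≤ 1 := by
          rw [← Real.rpow_natCast (N:ℝ) m, ← Real.rpow_mul hN0.le,
            ← Real.rpow_add hN0]
          apply Real.rpow_le_one_of_one_le_of_nonpos (by exact_mod_cast hN)
          have h4 : (0:ℝ) < 4 * ε := by linarith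
          have := (div_le_iff₀ h4).mp (by linarith : 1 / (4*ε) ≤ (m:ℝ) + 1)
          nlinarith
        calc c ^ (-(2 * ε)) * ((N:ℝ)^m) ^ (-(4 * ε)) * ((N:ℝ) ^ (1 - 4*ε) / (1 - 4*ε))
            = c ^ (-(2 * ε)) * ((((N:ℝ)^m) ^ (-(4 * ε)) * (N:ℝ) ^ (1 - 4*ε)) / (1 - 4*ε)) := by
              ring
          _ ≤ c ^ (-(2 * ε)) * (1 / (1 - 4*ε)) := by
              apply mul_le_mul_of_nonneg_left _ (Real.rpow_nonneg hc.le _)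
              exact div_le_div_of_nonneg_right key hp0.le
    _ = 1 / (c ^ (2 * ε) * (1 - 4 * ε)) := by
        rw [Real.rpow_neg hc.le]
        have : c ^ (2*ε) ≠ 0 := by positivity
        field_simp
end

section
/- Let c > 0, l ∈ ℕ, ε > 0, δ ≥ 1/2 + 2lε, m ∈ ℕ₀, t > 0, and N ∈ ℕ. Then ∫_0^t ( Σ_{j=1}^{N} e^{−2l³ c (j N^m)² s} (c (j N^m)²)^{−1/2 − 2lε + δ} )² ds ≥ (1 − e^{−ct}) / (4 l³ c^{2+4lε−2δ} N^{2m}) · Σ_{j,k=1}^{N} 1/(j² + k²). -/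
private lemma int_exp_neg (μ t : ℝ) (hμ : 0 < μ) :
    ∫ s in (0:ℝ)..t, Real.exp (-(μ * s)) = (1 - Real.exp (-(μ * t))) / μ := by
  have hcont : Continuous fun s : ℝ => Real.exp (-(μ * s)) := by continuity
  have hd : ∀ s ∈ Set.uIcc (0:ℝ) t,
      HasDerivAt (fun u : ℝ => -(Real.exp (-(μ * u)) / μ)) (Real.exp (-(μ * s))) s := by
    intro s _
    have h1 : HasDerivAt (fun u : ℝ => -(μ * u)) (-μ) s := by
      exact (((hasDerivAt_id s).const_mul μ).neg).congr_deriv (by simp)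
    have h3 := ((h1.exp).div_const μ).neg
    exact h3.congr_deriv (by field_simp)
  rw [intervalIntegral.integral_eq_sub_of_hasDerivAt hd (hcont.intervalIntegrable _ _)]
  rw [mul_zero, neg_zero, Real.exp_zero]
  field_simp
  ring

set_option maxHeartbeats 1000000 in
theorem stmt_10 (c ε δ t : ℝ) (hc : 0 < c) (hε : 0 < ε) (l : ℕ) (hl : 1 ≤ l)
    (hδ : 1 / 2 + 2 * (l : ℝ) * ε ≤ δ) (m : ℕ) (ht : 0 < t) (N : ℕ) (hN : 1 ≤ N) :
    (1 - Real.exp (-(c * t))) /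
        (4 * (l : ℝ) ^ 3 * c ^ (2 + 4 * (l : ℝ) * ε - 2 * δ) * (N : ℝ) ^ (2 * m)) *
      ∑ j ∈ Finset.Icc 1 N, ∑ k ∈ Finset.Icc 1 N, 1 / ((j : ℝ) ^ 2 + (k : ℝ) ^ 2) ≤
    ∫ s in (0 : ℝ)..t,
      (∑ j ∈ Finset.Icc 1 N,
        Real.exp (-(2 * (l : ℝ) ^ 3 * c * ((j * N ^ m : ℕ) : ℝ) ^ 2 * s)) *
          (c * ((j * N ^ m : ℕ) : ℝ) ^ 2) ^ (-(1 / 2) - 2 * (l : ℝ) * ε + δ)) ^ 2 := by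
  have hl1 : (1:ℝ) ≤ (l:ℝ) := by exact_mod_cast hl
  have hl3 : (1:ℝ) ≤ (l:ℝ) ^ 3 := one_le_pow₀ hl1
  set η : ℝ := -(1 / 2) - 2 * (l:ℝ) * ε + δ with hηdef
  have hη : 0 ≤ η := by rw [hηdef]; linarith
  set W : ℝ := (N:ℝ) ^ (2 * m) with hWdef
  have hW1 : (1:ℝ) ≤ W := by
    rw [hWdef]; exact one_le_pow₀ (by exact_mod_cast hN)
  have hW0 : (0:ℝ) < W := lt_of_lt_of_le one_pos hW1
  have hX1 : ∀ j : ℕ, 1 ≤ j → (1:ℝ) ≤ ((j * N ^ m : ℕ) : ℝ) := by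
    intro j hj
    exact_mod_cast Nat.mul_pos hj (pow_pos hN m)
  have hX2 : ∀ j : ℕ, ((j * N ^ m : ℕ) : ℝ) ^ 2 = (j:ℝ) ^ 2 * W := by
    intro j
    have h : ((N:ℝ) ^ m) ^ 2 = W := by rw [hWdef, ← pow_mul, Nat.mul_comm]
    push_cast
    rw [mul_pow, h]
  set F : ℕ → ℝ → ℝ := fun j s =>
    Real.exp (-(2 * (l:ℝ) ^ 3 * c * ((j * N ^ m : ℕ) : ℝ) ^ 2 * s)) *
      (c * ((j * N ^ m : ℕ) : ℝ) ^ 2) ^ η with hFdef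
  have hFc : ∀ j, Continuous (F j) := by
    intro j; rw [hFdef]; fun_prop
  have hprod : ∀ j k : ℕ, ∀ s : ℝ, F j s * F k s =
      (c * ((j * N ^ m : ℕ) : ℝ) ^ 2) ^ η * (c * ((k * N ^ m : ℕ) : ℝ) ^ 2) ^ η *
        Real.exp (-(2 * (l:ℝ) ^ 3 *
          (c * ((j * N ^ m : ℕ) : ℝ) ^ 2 + c * ((k * N ^ m : ℕ) : ℝ) ^ 2) * s)) := by
    intro j k s
    simp only [hFdef]
    rw [show -(2 * (l:ℝ) ^ 3 *
          (c * ((j * N ^ m : ℕ) : ℝ) ^ 2 + c * ((k * N ^ m : ℕ) : ℝ) ^ 2) * s)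
        = -(2 * (l:ℝ) ^ 3 * c * ((j * N ^ m : ℕ) : ℝ) ^ 2 * s) +
          -(2 * (l:ℝ) ^ 3 * c * ((k * N ^ m : ℕ) : ℝ) ^ 2 * s) from by ring,
      Real.exp_add]
    ring
  have hInt : (∫ s in (0:ℝ)..t, (∑ j ∈ Finset.Icc 1 N, F j s) ^ 2)
      = ∑ j ∈ Finset.Icc 1 N, ∑ k ∈ Finset.Icc 1 N, ∫ s in (0:ℝ)..t, F j s * F k s := by
    have h1 : (fun s => (∑ j ∈ Finset.Icc 1 N, F j s) ^ 2)
        = fun s => ∑ j ∈ Finset.Icc 1 N, ∑ k ∈ Finset.Icc 1 N, F j s * F k s := by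
      funext s; rw [pow_two, Finset.sum_mul_sum]
    rw [h1, intervalIntegral.integral_finset_sum (f := fun j s => ∑ k ∈ Finset.Icc 1 N, F j s * F k s) (fun j _ =>
      (continuous_finset_sum _ fun k _ => (hFc j).mul (hFc k)).intervalIntegrable _ _)]
    exact Finset.sum_congr rfl fun j _ => intervalIntegral.integral_finset_sum
      fun k _ => ((hFc j).mul (hFc k)).intervalIntegrable _ _
  have hEpos : 0 < 1 - Real.exp (-(c * t)) := by
    have h : Real.exp (-(c * t)) < Real.exp 0 := Real.exp_lt_exp.mpr (by nlinarith)
    rw [Real.exp_zero] at h; linarith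
  have hterm : ∀ j ∈ Finset.Icc 1 N, ∀ k ∈ Finset.Icc 1 N,
      (1 - Real.exp (-(c * t))) / (4 * (l:ℝ) ^ 3 * c ^ (2 + 4 * (l:ℝ) * ε - 2 * δ) * W) *
        (1 / ((j:ℝ) ^ 2 + (k:ℝ) ^ 2)) ≤ ∫ s in (0:ℝ)..t, F j s * F k s := by
    intro j hj k hk
    obtain ⟨hj1, hjN⟩ := Finset.mem_Icc.mp hj
    obtain ⟨hk1, hkN⟩ := Finset.mem_Icc.mp hk
    have hj1' : (1:ℝ) ≤ (j:ℝ) := by exact_mod_cast hj1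
    have hk1' : (1:ℝ) ≤ (k:ℝ) := by exact_mod_cast hk1
    set S : ℝ := (j:ℝ) ^ 2 + (k:ℝ) ^ 2 with hSdef
    have hS2 : (2:ℝ) ≤ S := by rw [hSdef]; nlinarith
    have hS0 : (0:ℝ) < S := by linarith
    have hXj2 : (1:ℝ) ≤ ((j * N ^ m : ℕ) : ℝ) ^ 2 := one_le_pow₀ (hX1 j hj1)
    have hXk2 : (1:ℝ) ≤ ((k * N ^ m : ℕ) : ℝ) ^ 2 := one_le_pow₀ (hX1 k hk1)
    set D : ℝ := 2 * (l:ℝ) ^ 3 * c * S * W with hDdef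
    have hD0 : 0 < D := by rw [hDdef]; positivity
    have hμeq : 2 * (l:ℝ) ^ 3 *
        (c * ((j * N ^ m : ℕ) : ℝ) ^ 2 + c * ((k * N ^ m : ℕ) : ℝ) ^ 2) = D := by
      rw [hDdef, hSdef, hX2 j, hX2 k]; ring
    have hint : ∫ s in (0:ℝ)..t, F j s * F k s
        = (c * ((j * N ^ m : ℕ) : ℝ) ^ 2) ^ η * (c * ((k * N ^ m : ℕ) : ℝ) ^ 2) ^ η *
          ((1 - Real.exp (-(D * t))) / D) := by
      simp only [hprod, hμeq]
      rw [intervalIntegral.integral_const_mul, int_exp_neg _ _ hD0]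
    rw [hint]
    set A : ℝ := c ^ (2 + 4 * (l:ℝ) * ε - 2 * δ) with hAdef
    have hA0 : 0 < A := Real.rpow_pos_of_pos hc _
    set B : ℝ := c ^ (η + η) with hBdef
    have hB0 : 0 < B := Real.rpow_pos_of_pos hc _
    have hAB : A * B = c := by
      rw [hAdef, hBdef, ← Real.rpow_add hc,
        show 2 + 4 * (l:ℝ) * ε - 2 * δ + (η + η) = 1 from by rw [hηdef]; ring,
        Real.rpow_one]
    have hKj : c ^ η ≤ (c * ((j * N ^ m : ℕ) : ℝ) ^ 2) ^ η :=
      Real.rpow_le_rpow hc.le (le_mul_of_one_le_right hc.le hXj2) hη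
    have hKk : c ^ η ≤ (c * ((k * N ^ m : ℕ) : ℝ) ^ 2) ^ η :=
      Real.rpow_le_rpow hc.le (le_mul_of_one_le_right hc.le hXk2) hη
    have hKprod : B ≤ (c * ((j * N ^ m : ℕ) : ℝ) ^ 2) ^ η *
        (c * ((k * N ^ m : ℕ) : ℝ) ^ 2) ^ η := by
      rw [hBdef, Real.rpow_add hc]
      exact mul_le_mul hKj hKk (Real.rpow_nonneg hc.le η)
        (Real.rpow_nonneg (by positivity) η)
    have hl3' : (0:ℝ) < (l:ℝ) ^ 3 := by linarith
    have hcD : c ≤ D := by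
      have e1 : (2:ℝ) ≤ (l:ℝ) ^ 3 * S := by
        calc (2:ℝ) = 1 * 2 := by norm_num
          _ ≤ (l:ℝ) ^ 3 * S := mul_le_mul hl3 hS2 (by norm_num) (by linarith)
      have e2 : (2:ℝ) ≤ (l:ℝ) ^ 3 * S * W :=
        e1.trans (le_mul_of_one_le_right (by linarith) hW1)
      rw [hDdef]
      calc c = c * 1 := (mul_one c).symm
        _ ≤ c * (2 * ((l:ℝ) ^ 3 * S * W)) :=
            mul_le_mul_of_nonneg_left (by linarith) hc.le
        _ = 2 * (l:ℝ) ^ 3 * c * S * W := by ring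
    have hE' : 1 - Real.exp (-(c * t)) ≤ 1 - Real.exp (-(D * t)) := by
      have h4 : c * t ≤ D * t := mul_le_mul_of_nonneg_right hcD ht.le
      have : Real.exp (-(D * t)) ≤ Real.exp (-(c * t)) :=
        Real.exp_le_exp.mpr (by linarith)
      linarith
    have heq : (1 - Real.exp (-(c * t))) / (4 * (l:ℝ) ^ 3 * A * W) * (1 / S)
        = B * ((1 - Real.exp (-(c * t))) / D) / 2 := by
      rw [hDdef, show 2 * (l:ℝ) ^ 3 * c * S * W = 2 * (l:ℝ) ^ 3 * (A * B) * S * W from by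
        rw [hAB]]
      have hl0 : (l:ℝ) ≠ 0 := by linarith
      field_simp
      ring
    calc (1 - Real.exp (-(c * t))) / (4 * (l:ℝ) ^ 3 * A * W) * (1 / S)
        = B * ((1 - Real.exp (-(c * t))) / D) / 2 := heq
      _ ≤ B * ((1 - Real.exp (-(c * t))) / D) :=
          half_le_self (by positivity)
      _ ≤ (c * ((j * N ^ m : ℕ) : ℝ) ^ 2) ^ η * (c * ((k * N ^ m : ℕ) : ℝ) ^ 2) ^ η *
          ((1 - Real.exp (-(D * t))) / D) := by
          apply mul_le_mul hKprod _ (by positivity) (by positivity)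
          gcongr
  calc (1 - Real.exp (-(c * t))) /
        (4 * (l:ℝ) ^ 3 * c ^ (2 + 4 * (l:ℝ) * ε - 2 * δ) * W) *
      ∑ j ∈ Finset.Icc 1 N, ∑ k ∈ Finset.Icc 1 N, 1 / ((j:ℝ) ^ 2 + (k:ℝ) ^ 2)
      = ∑ j ∈ Finset.Icc 1 N, ∑ k ∈ Finset.Icc 1 N,
          (1 - Real.exp (-(c * t))) /
            (4 * (l:ℝ) ^ 3 * c ^ (2 + 4 * (l:ℝ) * ε - 2 * δ) * W) *
          (1 / ((j:ℝ) ^ 2 + (k:ℝ) ^ 2)) := by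
        rw [Finset.mul_sum]
        exact Finset.sum_congr rfl fun j _ => Finset.mul_sum _ _ _
    _ ≤ ∑ j ∈ Finset.Icc 1 N, ∑ k ∈ Finset.Icc 1 N, ∫ s in (0:ℝ)..t, F j s * F k s :=
        Finset.sum_le_sum fun j hj => Finset.sum_le_sum fun k hk => hterm j hj k hk
    _ = ∫ s in (0:ℝ)..t, (∑ j ∈ Finset.Icc 1 N, F j s) ^ 2 := hInt.symm
end

section
/- Let c, t ∈ (0, ∞), let n, N ∈ ℕ, let k be a positive multiple of n, let l₁, ..., l_n ∈ ℕ, and let r₁, ..., r_n ∈ ℝ. Then Σ_{j=1}^{N} Π_{i=1}^{n} ( e^{−c(l_i + jk)² t} (c (jk/n)²)^{r_i} )² ≥ e^{−4ctn·max_i l_i²} · Σ_{j=1}^{N} ( e^{−2c(jk)² n t} (c (jk/n)²)^{Σ_{i=1}^{n} r_i} )². -/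
theorem stmt_12 (c t : ℝ) (hc : 0 < c) (ht : 0 < t) (n N k : ℕ) (hn : 1 ≤ n)
    (hN : 1 ≤ N) (hk : 1 ≤ k) (hnk : n ∣ k)
    (l : Fin n → ℕ) (hl : ∀ i, 1 ≤ l i) (r : Fin n → ℝ) :
    Real.exp (-(4 * c * t * (n : ℝ) * ((Finset.univ.sup l : ℕ) : ℝ) ^ 2)) *
      ∑ j ∈ Finset.Icc 1 N,
        (Real.exp (-(2 * c * ((j * k : ℕ) : ℝ) ^ 2 * (n : ℝ) * t)) *
          (c * (((j * k : ℕ) : ℝ) / (n : ℝ)) ^ 2) ^ (∑ i, r i)) ^ 2 ≤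
    ∑ j ∈ Finset.Icc 1 N, ∏ i : Fin n,
      (Real.exp (-(c * ((l i + j * k : ℕ) : ℝ) ^ 2 * t)) *
        (c * (((j * k : ℕ) : ℝ) / (n : ℝ)) ^ 2) ^ (r i)) ^ 2 := by
  rw [Finset.mul_sum]
  apply Finset.sum_le_sum
  intro j hj
  have hj1 : 1 ≤ j := (Finset.mem_Icc.mp hj).1
  have hn0 : (0:ℝ) < n := by exact_mod_cast hn
  have hjk : 0 < j * k := Nat.mul_pos hj1 hk
  have hjkR : (0:ℝ) < ((j * k : ℕ) : ℝ) := by exact_mod_cast hjk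
  set A : ℝ := c * (((j * k : ℕ) : ℝ) / (n : ℝ)) ^ 2 with hA
  have hApos : 0 < A := by
    apply mul_pos hc
    positivity
  set L : ℝ := ((Finset.univ.sup l : ℕ) : ℝ) with hL
  have hprod : (∏ i : Fin n,
      (Real.exp (-(c * ((l i + j * k : ℕ) : ℝ) ^ 2 * t)) * A ^ (r i)) ^ 2)
      = (Real.exp (∑ i : Fin n, -(c * ((l i + j * k : ℕ) : ℝ) ^ 2 * t))
          * A ^ (∑ i, r i)) ^ 2 := by
    rw [Finset.prod_pow, Finset.prod_mul_distrib, Real.exp_sum,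
      Real.rpow_sum_of_pos hApos]
  rw [hprod]
  have hsum : ∑ i : Fin n, (((l i + j * k : ℕ) : ℝ)) ^ 2
      ≤ (n : ℝ) * (2 * L ^ 2 + 2 * ((j * k : ℕ) : ℝ) ^ 2) := by
    have := Finset.sum_le_card_nsmul Finset.univ
      (fun i => (((l i + j * k : ℕ) : ℝ)) ^ 2)
      (2 * L ^ 2 + 2 * ((j * k : ℕ) : ℝ) ^ 2) ?_
    · simp only [Finset.card_univ, Fintype.card_fin, nsmul_eq_mul] at this
      linarith
    · intro i _
      have hli : ((l i : ℕ) : ℝ) ≤ L := by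
        exact_mod_cast Nat.cast_le.mpr (Finset.le_sup (Finset.mem_univ i))
      have hli0 : (0:ℝ) ≤ (l i : ℝ) := by positivity
      push_cast
      nlinarith [sq_nonneg ((l i : ℝ) - (j : ℝ) * (k : ℝ)),
        mul_self_le_mul_self hli0 hli]
  have hexp : Real.exp (-(4 * c * t * (n : ℝ) * L ^ 2)) *
      Real.exp (-(2 * c * ((j * k : ℕ) : ℝ) ^ 2 * (n : ℝ) * t)) ^ 2
      ≤ Real.exp (∑ i : Fin n, -(c * ((l i + j * k : ℕ) : ℝ) ^ 2 * t)) ^ 2 := by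
    rw [← Real.exp_nat_mul, ← Real.exp_nat_mul, ← Real.exp_add, Real.exp_le_exp]
    have hssum : ∑ i : Fin n, -(c * ((l i + j * k : ℕ) : ℝ) ^ 2 * t)
        = -(c * t * ∑ i : Fin n, (((l i + j * k : ℕ) : ℝ)) ^ 2) := by
      rw [Finset.mul_sum, ← Finset.sum_neg_distrib]
      exact Finset.sum_congr rfl fun i _ => by ring
    rw [hssum]
    push_cast at hsum ⊢
    nlinarith [mul_le_mul_of_nonneg_left hsum (le_of_lt (mul_pos hc ht))]
  calc Real.exp (-(4 * c * t * (n : ℝ) * L ^ 2)) *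
        (Real.exp (-(2 * c * ((j * k : ℕ) : ℝ) ^ 2 * (n : ℝ) * t)) * A ^ (∑ i, r i)) ^ 2
      = (Real.exp (-(4 * c * t * (n : ℝ) * L ^ 2)) *
          Real.exp (-(2 * c * ((j * k : ℕ) : ℝ) ^ 2 * (n : ℝ) * t)) ^ 2) *
          (A ^ (∑ i, r i)) ^ 2 := by ring
    _ ≤ Real.exp (∑ i : Fin n, -(c * ((l i + j * k : ℕ) : ℝ) ^ 2 * t)) ^ 2 *
          (A ^ (∑ i, r i)) ^ 2 := by
        apply mul_le_mul_of_nonneg_right hexp (by positivity)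
    _ = (Real.exp (∑ i : Fin n, -(c * ((l i + j * k : ℕ) : ℝ) ^ 2 * t))
          * A ^ (∑ i, r i)) ^ 2 := by ring
end

section
/- Let H be a separable infinite-dimensional real Hilbert space with orthonormal basis (e_n), let c > 0, let e^{tA} be given by e^{tA} e_n = e^{−cn²t} e_n, and let (−A)^r e_n = (cn²)^r e_n. Let ε ∈ (0, 1/4) and m ∈ ℕ₀ with m ≥ 1/(4ε) − 1, and set v^{i,−ε}_{nN^m,N} = Σ_{j=1}^{N} (c(i+jnN^m)²)^{−ε} e_{i+jnN^m}. Then for all N, n ∈ ℕ, i ∈ {1,...,n}, and all t ≥ 0: ‖e^{tA} v^{i,−ε}_{nN^m,N}‖² ≤ 1/(c^{2ε}(1−4ε)). -/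
open Real Finset

lemma gap_aux {q : ℝ} (hq0 : 0 ≤ q) (hq1 : q ≤ 1) {x : ℝ} (hx : 1 ≤ x) :
    q * x ^ (q - 1) ≤ x ^ q - (x - 1) ^ q := by
  have hx0 : 0 < x := lt_of_lt_of_le one_pos hx
  have hs : -1 ≤ -(1 / x) := by
    rw [neg_le_neg_iff]
    exact div_le_one_of_le₀ hx hx0.le
  have h := rpow_one_add_le_one_add_mul_self hs hq0 hq1
  have h1 : x - 1 = x * (1 + -(1 / x)) := by field_simp; ring
  have h2 : (x - 1) ^ q = x ^ q * (1 + -(1 / x)) ^ q := by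
    rw [h1, Real.mul_rpow hx0.le (by nlinarith)]
  have h3 : (x - 1) ^ q ≤ x ^ q * (1 + q * -(1 / x)) := by
    rw [h2]
    exact mul_le_mul_of_nonneg_left h (Real.rpow_nonneg hx0.le q)
  have h4 : x ^ q * (q * (1 / x)) = q * x ^ (q - 1) := by
    rw [Real.rpow_sub hx0, Real.rpow_one]
    field_simp
  nlinarith [h3, h4]

lemma sum_rpow_le {p : ℝ} (hp0 : 0 < p) (hp1 : p < 1) (N : ℕ) :
    ∑ j ∈ Finset.Icc 1 N, (j : ℝ) ^ (-p) ≤ (N : ℝ) ^ (1 - p) / (1 - p) := by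
  induction N with
  | zero => simp [Real.zero_rpow (by linarith : 1 - p ≠ 0)]
  | succ N ih =>
    rw [Finset.sum_Icc_succ_top (by omega)]
    have h1p : (0:ℝ) < 1 - p := by linarith
    have hgap := gap_aux (le_of_lt h1p) (by linarith) (x := (N:ℝ) + 1)
      (le_add_of_nonneg_left (Nat.cast_nonneg N))
    have hx : (N:ℝ) + 1 - 1 = (N:ℝ) := by ring
    rw [hx] at hgap
    have h2 : ((N:ℝ) + 1) ^ (-p) ≤ (((N:ℝ) + 1) ^ (1 - p) - (N:ℝ) ^ (1 - p)) / (1 - p) := by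
      rw [le_div_iff₀ h1p]
      have : (1:ℝ) - p - 1 = -p := by ring
      rw [this] at hgap
      nlinarith [hgap]
    have hdiv : (N:ℝ) ^ (1 - p) / (1 - p) + (((N:ℝ) + 1) ^ (1 - p) - (N:ℝ) ^ (1 - p)) / (1 - p)
        = ((N:ℝ) + 1) ^ (1 - p) / (1 - p) := by ring
    push_cast
    linarith [ih, h2]

theorem stmt_14 {H : Type*} [NormedAddCommGroup H] [InnerProductSpace ℝ H]
    (e : ℕ → H) (he : Orthonormal ℝ e)
    (c ε : ℝ) (hc : 0 < c) (hε : 0 < ε) (hε' : ε < 1 / 4)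
    (m : ℕ) (hm : 1 / (4 * ε) - 1 ≤ (m : ℝ))
    (N n i : ℕ) (hN : 1 ≤ N) (hn : 1 ≤ n) (hi : i ∈ Finset.Icc 1 n)
    (t : ℝ) (ht : 0 ≤ t) :
    ‖∑ j ∈ Finset.Icc 1 N,
        (Real.exp (-(c * ((i + j * n * N ^ m : ℕ) : ℝ) ^ 2 * t)) *
          (c * ((i + j * n * N ^ m : ℕ) : ℝ) ^ 2) ^ (-ε)) •
          e (i + j * n * N ^ m)‖ ^ 2 ≤
      1 / (c ^ (2 * ε) * (1 - 4 * ε)) := by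
  obtain ⟨hi1, hi2⟩ := Finset.mem_Icc.mp hi
  set g : ℕ → ℕ := fun j => i + j * n * N ^ m with hg_def
  have hM : 0 < n * N ^ m := Nat.mul_pos hn (Nat.pow_pos hN)
  have hg_inj : Function.Injective g := by
    intro a b hab
    simp only [hg_def, mul_assoc] at hab
    have := Nat.add_left_cancel hab
    exact Nat.eq_of_mul_eq_mul_right hM this
  set a : ℕ → ℝ := fun j =>
    Real.exp (-(c * ((g j : ℕ) : ℝ) ^ 2 * t)) * (c * ((g j : ℕ) : ℝ) ^ 2) ^ (-ε) with ha_def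
  have hnorm : ‖∑ j ∈ Finset.Icc 1 N, a j • e (g j)‖ ^ 2 = ∑ j ∈ Finset.Icc 1 N, (a j) ^ 2 := by
    rw [← real_inner_self_eq_norm_sq]
    have := (he.comp g hg_inj).inner_sum a a (Finset.Icc 1 N)
    simp only [Function.comp] at this
    rw [this]
    simp [sq]
  rw [hnorm]
  -- termwise bound
  have hterm : ∀ j ∈ Finset.Icc 1 N,
      (a j) ^ 2 ≤ c ^ (-(2 * ε)) * ((N:ℝ) ^ (-(4 * ε * m)) * (j:ℝ) ^ (-(4 * ε))) := by
    intro j hj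
    obtain ⟨hj1, hj2⟩ := Finset.mem_Icc.mp hj
    have hk : 0 < g j := by positivity
    have hkR : (0:ℝ) < ((g j : ℕ) : ℝ) := by exact_mod_cast hk
    have hbase : (0:ℝ) < c * ((g j : ℕ) : ℝ) ^ 2 := by positivity
    have hexp : Real.exp (-(c * ((g j : ℕ) : ℝ) ^ 2 * t)) ≤ 1 :=
      Real.exp_le_one_iff.mpr (by nlinarith)
    have hY : (0:ℝ) ≤ (c * ((g j : ℕ) : ℝ) ^ 2) ^ (-ε) := Real.rpow_nonneg hbase.le _
    have h1 : (a j) ^ 2 ≤ ((c * ((g j : ℕ) : ℝ) ^ 2) ^ (-ε)) ^ 2 := by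
      rw [ha_def]
      simp only [mul_pow]
      have : Real.exp (-(c * ((g j : ℕ) : ℝ) ^ 2 * t)) ^ 2 ≤ 1 := by
        nlinarith [Real.exp_pos (-(c * ((g j : ℕ) : ℝ) ^ 2 * t))]
      nlinarith [sq_nonneg ((c * ((g j : ℕ) : ℝ) ^ 2) ^ (-ε))]
    have h2 : ((c * ((g j : ℕ) : ℝ) ^ 2) ^ (-ε)) ^ 2
        = c ^ (-(2 * ε)) * ((g j : ℕ) : ℝ) ^ (-(4 * ε)) := by
      rw [← Real.rpow_natCast ((c * ((g j : ℕ) : ℝ) ^ 2) ^ (-ε)) 2,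
        ← Real.rpow_mul hbase.le, Real.mul_rpow hc.le (by positivity),
        ← Real.rpow_natCast ((g j : ℕ) : ℝ) 2, ← Real.rpow_mul hkR.le]
      norm_num
      rw [show -(ε * 2) = -(2 * ε) from by ring, show -(2 * (ε * 2)) = -(4 * ε) from by ring]
    have h3 : ((g j : ℕ) : ℝ) ^ (-(4 * ε)) ≤ (((j * N ^ m : ℕ) : ℝ)) ^ (-(4 * ε)) := by
      apply Real.rpow_le_rpow_of_nonpos
      · have : 0 < j * N ^ m := by positivity
        exact_mod_cast this
      · have h4 : j * N ^ m ≤ j * n * N ^ m :=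
          Nat.mul_le_mul_right _ (Nat.le_mul_of_pos_right j hn)
        have h5 : j * n * N ^ m ≤ g j := Nat.le_add_left _ _
        exact_mod_cast le_trans h4 h5
      · linarith
    have h4 : (((j * N ^ m : ℕ) : ℝ)) ^ (-(4 * ε))
        = (N:ℝ) ^ (-(4 * ε * m)) * (j:ℝ) ^ (-(4 * ε)) := by
      push_cast
      rw [Real.mul_rpow (Nat.cast_nonneg j) (by positivity),
        ← Real.rpow_natCast (N:ℝ) m, ← Real.rpow_mul (Nat.cast_nonneg N)]
      ring_nf
    calc (a j) ^ 2 ≤ ((c * ((g j : ℕ) : ℝ) ^ 2) ^ (-ε)) ^ 2 := h1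
      _ = c ^ (-(2 * ε)) * ((g j : ℕ) : ℝ) ^ (-(4 * ε)) := h2
      _ ≤ c ^ (-(2 * ε)) * ((((j * N ^ m : ℕ) : ℝ)) ^ (-(4 * ε))) := by
          exact mul_le_mul_of_nonneg_left h3 (Real.rpow_nonneg hc.le _)
      _ = c ^ (-(2 * ε)) * ((N:ℝ) ^ (-(4 * ε * m)) * (j:ℝ) ^ (-(4 * ε))) := by rw [h4]
  have hsum := Finset.sum_le_sum hterm
  have hsum2 : ∑ j ∈ Finset.Icc 1 N, c ^ (-(2 * ε)) * ((N:ℝ) ^ (-(4 * ε * m)) * (j:ℝ) ^ (-(4 * ε)))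
      = c ^ (-(2 * ε)) * (N:ℝ) ^ (-(4 * ε * m)) * ∑ j ∈ Finset.Icc 1 N, (j:ℝ) ^ (-(4 * ε)) := by
    rw [Finset.mul_sum]
    exact Finset.sum_congr rfl fun j _ => by ring
  have hp0 : (0:ℝ) < 4 * ε := by linarith
  have hp1 : 4 * ε < 1 := by linarith
  have hsr := sum_rpow_le hp0 hp1 N
  have hNpos : (0:ℝ) < (N:ℝ) := by exact_mod_cast hN
  have hc2 : (0:ℝ) < c ^ (-(2 * ε)) := Real.rpow_pos_of_pos hc _
  have hNm : (0:ℝ) < (N:ℝ) ^ (-(4 * ε * m)) := Real.rpow_pos_of_pos hNpos _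
  have h1e : (0:ℝ) < 1 - 4 * ε := by linarith
  -- combine powers of N
  have hNcomb : (N:ℝ) ^ (-(4 * ε * m)) * (N:ℝ) ^ (1 - 4 * ε) ≤ 1 := by
    rw [← Real.rpow_add hNpos]
    apply Real.rpow_le_one_of_one_le_of_nonpos (by exact_mod_cast hN)
    have h4e : (0:ℝ) < 4 * ε := hp0
    rw [div_sub' (ne_of_gt h4e), div_le_iff₀ h4e] at hm
    nlinarith
  have hfinal : c ^ (-(2 * ε)) * (N:ℝ) ^ (-(4 * ε * m)) * ((N:ℝ) ^ (1 - 4 * ε) / (1 - 4 * ε))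
      ≤ 1 / (c ^ (2 * ε) * (1 - 4 * ε)) := by
    rw [Real.rpow_neg hc.le]
    have hcpos : (0:ℝ) < c ^ (2 * ε) := Real.rpow_pos_of_pos hc _
    have heq : (c ^ (2 * ε))⁻¹ * (N:ℝ) ^ (-(4 * ε * m)) * ((N:ℝ) ^ (1 - 4 * ε) / (1 - 4 * ε))
        = ((N:ℝ) ^ (-(4 * ε * m)) * (N:ℝ) ^ (1 - 4 * ε)) * (1 / (c ^ (2 * ε) * (1 - 4 * ε))) := by
      field_simp
    rw [heq]
    calc ((N:ℝ) ^ (-(4 * ε * m)) * (N:ℝ) ^ (1 - 4 * ε)) * (1 / (c ^ (2 * ε) * (1 - 4 * ε)))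
        ≤ 1 * (1 / (c ^ (2 * ε) * (1 - 4 * ε))) :=
          mul_le_mul_of_nonneg_right hNcomb (by positivity)
      _ = 1 / (c ^ (2 * ε) * (1 - 4 * ε)) := one_mul _
  calc ∑ j ∈ Finset.Icc 1 N, (a j) ^ 2
      ≤ c ^ (-(2 * ε)) * (N:ℝ) ^ (-(4 * ε * m)) * ∑ j ∈ Finset.Icc 1 N, (j:ℝ) ^ (-(4 * ε)) := by
        rw [← hsum2]; exact hsum
    _ ≤ c ^ (-(2 * ε)) * (N:ℝ) ^ (-(4 * ε * m)) * ((N:ℝ) ^ (1 - 4 * ε) / (1 - 4 * ε)) := by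
        apply mul_le_mul_of_nonneg_left hsr (by positivity)
    _ ≤ 1 / (c ^ (2 * ε) * (1 - 4 * ε)) := hfinal
end
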